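/- arXiv:2401.07924 — 8 statements merged into one kernel-verified Lean document; each statement's English description precedes it below -/
import Mathlib

section
/- For every n ≥ 2, the cactus group J_n is isomorphic to the group presented by generators x_2, x_3, …, x_n subject to the relations: x_i² = 1 for 2 ≤ i ≤ n; (x_k x_i x_k x_j)² = 1 for all i, j, k with 4 ≤ i + j ≤ k ≤ n and 2 ≤ i ≤ j; and x_k x_{i+j} x_j x_{i+j} = x_{k−i} x_j x_{k−i} x_k for all i, j, k with 3 ≤ i + j < k ≤ n, 1 ≤ i, 2 ≤ j and i + j ≤ k − i. Moreover there is such an isomorphism sending x_i to σ_{1,i} for each 2 ≤ i ≤ n. -/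
/-- Generators of the cactus group `J n`: pairs `(p, q)` with `1 ≤ p < q ≤ n`. -/
abbrev CactusGen (n : ℕ) := {pq : ℕ × ℕ // 1 ≤ pq.1 ∧ pq.1 < pq.2 ∧ pq.2 ≤ n}

/-- The defining relators of the standard presentation of the cactus group `J n`:
`σ_{p,q}² = 1`; `σ_{p,q}σ_{r,s} = σ_{r,s}σ_{p,q}` when `[p,q] ∩ [r,s] = ∅`;
and `σ_{p,q}σ_{r,s} = σ_{p+q-s,p+q-r}σ_{p,q}` when `[r,s] ⊆ [p,q]`. -/
def cactusRels (n : ℕ) : Set (FreeGroup (CactusGen n)) :=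
  { w | (∃ g : CactusGen n, w = FreeGroup.of g ^ 2) ∨
    (∃ g h : CactusGen n, (g.1.2 < h.1.1 ∨ h.1.2 < g.1.1) ∧
      w = FreeGroup.of g * FreeGroup.of h * (FreeGroup.of h * FreeGroup.of g)⁻¹) ∨
    (∃ g h k : CactusGen n, g.1.1 ≤ h.1.1 ∧ h.1.2 ≤ g.1.2 ∧
      k.1.1 = g.1.1 + g.1.2 - h.1.2 ∧ k.1.2 = g.1.1 + g.1.2 - h.1.1 ∧
      w = FreeGroup.of g * FreeGroup.of h * (FreeGroup.of k * FreeGroup.of g)⁻¹) }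

/-- The cactus group `J n`, as a presented group. -/
abbrev CactusGroup (n : ℕ) := PresentedGroup (cactusRels n)

/-- The generator `σ_{p,q}` of the cactus group `J n` (junk value `1` for invalid indices). -/
def cactusσ (n p q : ℕ) : CactusGroup n :=
  if h : 1 ≤ p ∧ p < q ∧ q ≤ n then PresentedGroup.of ⟨(p, q), h⟩ else 1

/-- The relators of the minimal presentation of the cactus group, on generators
`x_i = σ_{1,i}` for `2 ≤ i ≤ n`. -/
def cactusMinRels (n : ℕ) : Set (FreeGroup {i : ℕ // 2 ≤ i ∧ i ≤ n}) :=
  { w | (∃ g : {i : ℕ // 2 ≤ i ∧ i ≤ n}, w = FreeGroup.of g ^ 2) ∨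
    (∃ gi gj gk : {i : ℕ // 2 ≤ i ∧ i ≤ n},
      4 ≤ gi.1 + gj.1 ∧ gi.1 + gj.1 ≤ gk.1 ∧ 2 ≤ gi.1 ∧ gi.1 ≤ gj.1 ∧
      w = (FreeGroup.of gk * FreeGroup.of gi * FreeGroup.of gk * FreeGroup.of gj) ^ 2) ∨
    (∃ (i j : ℕ) (gk gij gj gki : {i : ℕ // 2 ≤ i ∧ i ≤ n}),
      3 ≤ i + j ∧ i + j < gk.1 ∧ 1 ≤ i ∧ 2 ≤ j ∧ i + j ≤ gk.1 - i ∧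
      gij.1 = i + j ∧ gj.1 = j ∧ gki.1 = gk.1 - i ∧
      w = FreeGroup.of gk * FreeGroup.of gij * FreeGroup.of gj * FreeGroup.of gij *
          (FreeGroup.of gki * FreeGroup.of gj * FreeGroup.of gki * FreeGroup.of gk)⁻¹) }

/-!
Every generator of `J_n` is a word in the `x_i = σ_{1,i}`, namely `σ_{p,q} = x_q x_{q+1-p} x_q`.
In `J_n` the `x_i` satisfy the minimal relations, since `σ_{1,k}` conjugates `σ_{r,s}` into
`σ_{k+1-s,k+1-r}` and disjoint generators commute. Conversely the minimal relations yield the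
reflection rule `x_k (x_m x_j x_m) x_k = x_{k+j-m} x_j x_{k+j-m}` for `j ≤ m ≤ k` (the braid
relation when `2m ≤ k+j`, its mirror image otherwise); three reflections give the nested
conjugation relation for the words `x_q x_{q+1-p} x_q`, and two reflections around one commutation
give the disjoint commutation relation. The two induced homomorphisms are mutually inverse on
generators.
-/

namespace Cactus

variable {G H : Type*} [Group G] [Group H] {n : ℕ}

lemma commute_iff_mul_sq_eq_one {a b : G} (ha : a * a = 1) (hb : b * b = 1) :
    Commute a b ↔ (a * b) ^ 2 = 1 := by
  rw [pow_two, commute_iff_eq, ← eq_inv_iff_mul_eq_one, mul_inv_rev,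
    inv_eq_of_mul_eq_one_right ha, inv_eq_of_mul_eq_one_right hb]

lemma conj_mul_self {a b : G} (ha : a * a = 1) (hb : b * b = 1) :
    a * b * a * (a * b * a) = 1 := by
  rw [mul_assoc (a * b), ← mul_assoc a, ← mul_assoc a, ha, one_mul, mul_assoc a, ← mul_assoc b,
    hb, one_mul, ha]

lemma commute_of_mul_mul_eq {a b : G} (ha : a * a = 1) (h : a * b * a = b) : Commute a b := by
  rw [commute_iff_eq]
  calc a * b = a * b * a * a := by rw [mul_assoc _ a a, ha, mul_one]
    _ = b * a := by rw [h]

/-- Involutivity is imposed at every index here and in `IsMinCactusFamily`, as the junk value `1`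
of `cactusσ` and `minGen` satisfies it. -/
structure IsCactusFamily (n : ℕ) (s : ℕ → ℕ → G) : Prop where
  mul_self : ∀ p q, s p q * s p q = 1
  commute : ∀ p q r t, 1 ≤ p → p < q → q < r → r < t → t ≤ n → Commute (s p q) (s r t)
  conj : ∀ p q r t, 1 ≤ p → p ≤ r → r < t → t ≤ q → q ≤ n →
    s p q * s r t * s p q = s (p + q - t) (p + q - r)

structure IsMinCactusFamily (n : ℕ) (x : ℕ → G) : Prop where
  mul_self : ∀ m, x m * x m = 1
  commute : ∀ i j k, 2 ≤ i → i ≤ j → i + j ≤ k → k ≤ n → Commute (x k * x i * x k) (x j)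
  braid : ∀ i j k, 1 ≤ i → 2 ≤ j → i + j ≤ k - i → k ≤ n →
    x k * x (i + j) * x j * x (i + j) = x (k - i) * x j * x (k - i) * x k

/-- In `J n` one has `σ_{p,q} = σ_{1,q} σ_{1,q+1-p} σ_{1,q}`, so every generator is a word in
the `x_i = σ_{1,i}`. -/
def sigmaOf (x : ℕ → G) (p q : ℕ) : G := x q * x (q + 1 - p) * x q

lemma map_sigmaOf (f : G →* H) (x : ℕ → G) (p q : ℕ) :
    f (sigmaOf x p q) = sigmaOf (f ∘ x) p q := by
  simp only [sigmaOf, map_mul, Function.comp_apply]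

namespace IsMinCactusFamily

variable {x : ℕ → G}

lemma mul_self_mul (hx : IsMinCactusFamily n x) (m : ℕ) (g : G) : x m * (x m * g) = g := by
  rw [← mul_assoc, hx.mul_self, one_mul]

lemma conj_conj_of_two_mul_le (hx : IsMinCactusFamily n x) {j m k : ℕ} (hj : 2 ≤ j)
    (hjm : j ≤ m) (hm : 2 * m ≤ k + j) (hk : k ≤ n) :
    x k * (x m * x j * x m) * x k = x (k + j - m) * x j * x (k + j - m) := by
  obtain rfl | hjm := hjm.eq_or_lt
  · rw [Nat.add_sub_cancel]
    simp only [mul_assoc, hx.mul_self_mul]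
  · have braid := hx.braid (m - j) j k (by omega) hj (by omega) hk
    rw [Nat.sub_add_cancel hjm.le, show k - (m - j) = k + j - m by omega] at braid
    calc x k * (x m * x j * x m) * x k = x k * x m * x j * x m * x k := by group
      _ = _ := by rw [braid]; simp only [mul_assoc, hx.mul_self, mul_one]

lemma conj_conj (hx : IsMinCactusFamily n x) {j m k : ℕ} (hj : 2 ≤ j) (hjm : j ≤ m)
    (hmk : m ≤ k) (hk : k ≤ n) :
    x k * (x m * x j * x m) * x k = x (k + j - m) * x j * x (k + j - m) := by
  rcases le_total (2 * m) (k + j) with h | h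
  · exact hx.conj_conj_of_two_mul_le hj hjm h hk
  · have h' := hx.conj_conj_of_two_mul_le (m := k + j - m) hj (by omega) (by omega) hk
    rw [show k + j - (k + j - m) = m by omega] at h'
    rw [← h']
    simp only [mul_assoc, hx.mul_self_mul, hx.mul_self, mul_one]

lemma commute' (hx : IsMinCactusFamily n x) {i j k : ℕ} (hi : 2 ≤ i) (hj : 2 ≤ j)
    (hk : i + j ≤ k) (hkn : k ≤ n) : Commute (x k * x i * x k) (x j) := by
  rcases le_total i j with h | h
  · exact hx.commute i j k hi h hk hkn
  · have hc := (hx.commute j i k hj h (by omega) hkn).conj (x k)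
    rw [inv_eq_of_mul_eq_one_right (hx.mul_self k)] at hc
    simp only [mul_assoc, hx.mul_self_mul, hx.mul_self, mul_one] at hc ⊢
    exact hc.symm

lemma sigmaOf_one (hx : IsMinCactusFamily n x) (i : ℕ) : sigmaOf x 1 i = x i := by
  rw [sigmaOf, Nat.add_sub_cancel, mul_assoc, hx.mul_self_mul]

lemma sigmaOf_mul_self (hx : IsMinCactusFamily n x) (p q : ℕ) :
    sigmaOf x p q * sigmaOf x p q = 1 := by
  simp only [sigmaOf, mul_assoc, hx.mul_self_mul, hx.mul_self]

lemma sigmaOf_conj (hx : IsMinCactusFamily n x) {p q r t : ℕ} (hp : 1 ≤ p) (hpr : p ≤ r)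
    (hrt : r < t) (htq : t ≤ q) (hq : q ≤ n) :
    sigmaOf x p q * sigmaOf x r t * sigmaOf x p q = sigmaOf x (p + q - t) (p + q - r) := by
  set L := q + 1 - p
  set M := t + 1 - r
  have h1 := hx.conj_conj (j := M) (m := t) (k := q) (by omega) (by omega) htq hq
  have h2 := hx.conj_conj (j := M) (m := q + M - t) (k := L)
    (by omega) (by omega) (by omega) (by omega)
  have h3 := hx.conj_conj (j := M) (m := L + M - (q + M - t)) (k := q)
    (by omega) (by omega) (by omega) hq
  rw [show q + M - (L + M - (q + M - t)) = p + q - r by omega] at h3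
  rw [sigmaOf, sigmaOf, sigmaOf, show p + q - r + 1 - (p + q - t) = M by omega]
  calc x q * x L * x q * (x t * x M * x t) * (x q * x L * x q)
      = x q * (x L * (x q * (x t * x M * x t) * x q) * x L) * x q := by group
    _ = x (p + q - r) * x M * x (p + q - r) := by rw [h1, h2, h3]

lemma sigmaOf_commute (hx : IsMinCactusFamily n x) {p q r t : ℕ} (hp : 1 ≤ p) (hpq : p < q)
    (hqr : q < r) (hrt : r < t) (ht : t ≤ n) :
    Commute (sigmaOf x p q) (sigmaOf x r t) := by
  refine (commute_of_mul_mul_eq (hx.sigmaOf_mul_self r t) ?_).symm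
  set L := t + 1 - r
  set M := q + 1 - p
  have h1 := hx.conj_conj (j := M) (m := q) (k := t) (by omega) (by omega) (by omega) ht
  have h2 := hx.commute' (i := M) (j := L) (k := t + M - q)
    (by omega) (by omega) (by omega) (by omega)
  have h3 := hx.conj_conj (j := M) (m := t + M - q) (k := t) (by omega) (by omega) (by omega) ht
  rw [show t + M - (t + M - q) = q by omega] at h3
  simp only [sigmaOf]
  calc x t * x L * x t * (x q * x M * x q) * (x t * x L * x t)
      = x t * (x L * (x t * (x q * x M * x q) * x t) * x L) * x t := by group
    _ = x t * (x (t + M - q) * x M * x (t + M - q) * (x L * x L)) * x t := by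
        rw [h1, ← mul_assoc, ← h2.eq]; group
    _ = x q * x M * x q := by rw [hx.mul_self, mul_one, h3]

lemma lift_eq_one (hx : IsMinCactusFamily n x) :
    ∀ r ∈ cactusMinRels n, FreeGroup.lift (fun g : {i : ℕ // 2 ≤ i ∧ i ≤ n} => x g.1) r = 1 := by
  rintro _ (⟨g, rfl⟩ | ⟨gi, gj, gk, -, hk, hi, hij, rfl⟩ |
    ⟨i, j, gk, gij, gj, gki, -, -, hi, hj, hk, hgij, hgj, hgki, rfl⟩)
  · rw [map_pow, FreeGroup.lift_apply_of, pow_two, hx.mul_self]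
  · simp only [map_pow, map_mul, FreeGroup.lift_apply_of]
    rw [← commute_iff_mul_sq_eq_one (conj_mul_self (hx.mul_self _) (hx.mul_self _))
      (hx.mul_self _)]
    exact hx.commute _ _ _ hi hij hk gk.2.2
  · simp only [map_mul, map_inv, FreeGroup.lift_apply_of, mul_inv_eq_one]
    rw [hgij, hgj, hgki]
    exact hx.braid i j gk hi hj hk gk.2.2

lemma isCactusFamily_sigmaOf (hx : IsMinCactusFamily n x) : IsCactusFamily n (sigmaOf x) where
  mul_self := hx.sigmaOf_mul_self
  commute _ _ _ _ hp hpq hqr hrt ht := hx.sigmaOf_commute hp hpq hqr hrt ht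
  conj _ _ _ _ hp hpr hrt htq hq := hx.sigmaOf_conj hp hpr hrt htq hq

end IsMinCactusFamily

namespace IsCactusFamily

variable {s : ℕ → ℕ → G}

lemma sigmaOf_one_eq (hs : IsCactusFamily n s) {p q : ℕ} (hp : 1 ≤ p) (hpq : p < q)
    (hq : q ≤ n) : sigmaOf (s 1) p q = s p q := by
  have h := hs.conj 1 q 1 (q + 1 - p) le_rfl le_rfl (by omega) (by omega) hq
  rwa [show 1 + q - (q + 1 - p) = p by omega, Nat.add_sub_cancel_left] at h

lemma commute_one (hs : IsCactusFamily n s) {i j k : ℕ} (hi : 2 ≤ i) (hj : 2 ≤ j)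
    (hk : i + j ≤ k) (hkn : k ≤ n) : Commute (s 1 k * s 1 i * s 1 k) (s 1 j) := by
  rw [hs.conj 1 k 1 i le_rfl le_rfl (by omega) (by omega) hkn, Nat.add_sub_cancel_left]
  exact (hs.commute 1 j (1 + k - i) k le_rfl (by omega) (by omega) (by omega) hkn).symm

lemma braid_one (hs : IsCactusFamily n s) {i j k : ℕ} (hi : 1 ≤ i) (hj : 2 ≤ j)
    (hk : i + j ≤ k - i) (hkn : k ≤ n) :
    s 1 k * s 1 (i + j) * s 1 j * s 1 (i + j) = s 1 (k - i) * s 1 j * s 1 (k - i) * s 1 k := by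
  have h1 := hs.conj 1 (i + j) 1 j le_rfl le_rfl (by omega) (by omega) (by omega)
  have h2 := hs.conj 1 k (1 + (i + j) - j) (1 + (i + j) - 1)
    le_rfl (by omega) (by omega) (by omega) hkn
  have h3 := hs.conj 1 (k - i) 1 j le_rfl le_rfl (by omega) (by omega) (by omega)
  rw [show 1 + (k - i) - j = 1 + k - (1 + (i + j) - 1) by omega,
    show 1 + (k - i) - 1 = 1 + k - (1 + (i + j) - j) by omega] at h3
  calc s 1 k * s 1 (i + j) * s 1 j * s 1 (i + j)
      = s 1 k * (s 1 (i + j) * s 1 j * s 1 (i + j)) * s 1 k * s 1 k := by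
        rw [mul_assoc _ (s 1 k), hs.mul_self, mul_one]; group
    _ = s 1 (k - i) * s 1 j * s 1 (k - i) * s 1 k := by rw [h1, h2, h3]

lemma isMinCactusFamily (hs : IsCactusFamily n s) : IsMinCactusFamily n (s 1) where
  mul_self := hs.mul_self 1
  commute _ _ _ hi hij hk hkn := hs.commute_one hi (by omega) hk hkn
  braid _ _ _ hi hj hk hkn := hs.braid_one hi hj hk hkn

lemma lift_eq_one (hs : IsCactusFamily n s) :
    ∀ r ∈ cactusRels n, FreeGroup.lift (fun g : CactusGen n => s g.1.1 g.1.2) r = 1 := by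
  rintro _ (⟨g, rfl⟩ | ⟨g, h, hgh, rfl⟩ | ⟨g, h, k, hgh₁, hgh₂, hk₁, hk₂, rfl⟩)
  · rw [map_pow, FreeGroup.lift_apply_of, pow_two, hs.mul_self]
  · obtain ⟨⟨p, q⟩, hp, hpq, hq⟩ := g
    obtain ⟨⟨r, t⟩, hr, hrt, ht⟩ := h
    simp only [map_mul, map_inv, FreeGroup.lift_apply_of, mul_inv_eq_one]
    rcases hgh with hqr | htp
    · exact hs.commute p q r t hp hpq hqr hrt ht
    · exact (hs.commute r t p q hr hrt htp hpq hq).symm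
  · obtain ⟨⟨p, q⟩, hp, hpq, hq⟩ := g
    obtain ⟨⟨r, t⟩, hr, hrt, ht⟩ := h
    obtain ⟨⟨_, _⟩, _⟩ := k
    simp only at hgh₁ hgh₂ hk₁ hk₂
    subst hk₁ hk₂
    simp only [map_mul, map_inv, FreeGroup.lift_apply_of, mul_inv_eq_one]
    rw [← hs.conj p q r t hp hgh₁ hrt hgh₂ hq, mul_assoc _ (s p q), hs.mul_self, mul_one]

end IsCactusFamily

lemma cactusσ_of (g : CactusGen n) : cactusσ n g.1.1 g.1.2 = PresentedGroup.of g :=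
  dif_pos g.2

lemma cactusσ_mul_self (p q : ℕ) : cactusσ n p q * cactusσ n p q = 1 := by
  unfold cactusσ
  split_ifs with h
  · rw [← pow_two]
    exact PresentedGroup.one_of_mem (Or.inl ⟨⟨(p, q), h⟩, rfl⟩)
  · exact one_mul 1

lemma isCactusFamily_cactusσ : IsCactusFamily n (cactusσ n) where
  mul_self := cactusσ_mul_self
  commute p q r t hp hpq hqr hrt ht := by
    have hrel := PresentedGroup.one_of_mem (rels := cactusRels n)
      (Or.inr (Or.inl ⟨⟨(p, q), hp, hpq, by omega⟩, ⟨(r, t), by omega, hrt, ht⟩,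
        Or.inl hqr, rfl⟩))
    simp only [map_mul, map_inv, mul_inv_eq_one] at hrel
    rwa [cactusσ, dif_pos, cactusσ, dif_pos]
  conj p q r t hp hpr hrt htq hq := by
    have hrel := PresentedGroup.one_of_mem (rels := cactusRels n)
      (Or.inr (Or.inr ⟨⟨(p, q), hp, by omega, hq⟩, ⟨(r, t), by omega, hrt, by omega⟩,
        ⟨(p + q - t, p + q - r), by omega, by omega, by omega⟩, hpr, htq, rfl, rfl, rfl⟩))
    simp only [map_mul, map_inv, mul_inv_eq_one] at hrel
    have hmul : cactusσ n p q * cactusσ n r t =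
        cactusσ n (p + q - t) (p + q - r) * cactusσ n p q := by
      rwa [cactusσ, dif_pos, cactusσ, dif_pos, cactusσ, dif_pos]
    rw [hmul, mul_assoc, cactusσ_mul_self, mul_one]

def minGen (n m : ℕ) : PresentedGroup (cactusMinRels n) :=
  if h : 2 ≤ m ∧ m ≤ n then PresentedGroup.of ⟨m, h⟩ else 1

lemma minGen_mul_self (m : ℕ) : minGen n m * minGen n m = 1 := by
  unfold minGen
  split_ifs with h
  · rw [← pow_two]
    exact PresentedGroup.one_of_mem (Or.inl ⟨⟨m, h⟩, rfl⟩)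
  · exact one_mul 1

lemma isMinCactusFamily_minGen (n : ℕ) : IsMinCactusFamily n (minGen n) where
  mul_self := minGen_mul_self
  commute i j k hi hij hk hkn := by
    have hrel := PresentedGroup.one_of_mem (rels := cactusMinRels n)
      (Or.inr (Or.inl ⟨⟨i, hi, by omega⟩, ⟨j, by omega, by omega⟩, ⟨k, by omega, hkn⟩,
        show 4 ≤ i + j by omega, hk, hi, hij, rfl⟩))
    simp only [map_pow, map_mul] at hrel
    rw [commute_iff_mul_sq_eq_one (conj_mul_self (minGen_mul_self k) (minGen_mul_self i))
      (minGen_mul_self j)]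
    rwa [minGen, dif_pos, minGen, dif_pos, minGen, dif_pos]
  braid i j k hi hj hk hkn := by
    have hrel := PresentedGroup.one_of_mem (rels := cactusMinRels n)
      (Or.inr (Or.inr ⟨i, j, ⟨k, by omega, hkn⟩, ⟨i + j, by omega, by omega⟩,
        ⟨j, hj, by omega⟩, ⟨k - i, by omega, by omega⟩,
        show 3 ≤ i + j by omega, show i + j < k by omega, hi, hj, hk, rfl, rfl, rfl, rfl⟩))
    simp only [map_mul, map_inv, mul_inv_eq_one] at hrel
    rwa [minGen, dif_pos, minGen, dif_pos, minGen, dif_pos, minGen, dif_pos]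

end Cactus

theorem cactus_minimal_presentation_general (n : ℕ) :
    ∃ e : PresentedGroup (cactusMinRels n) ≃* CactusGroup n,
      ∀ (i : ℕ) (h : 2 ≤ i ∧ i ≤ n),
        e (PresentedGroup.of ⟨i, h⟩) = cactusσ n 1 i := by
  have hσ := Cactus.isCactusFamily_cactusσ (n := n)
  have hx := Cactus.isMinCactusFamily_minGen n
  have hφ_rels := hσ.isMinCactusFamily.lift_eq_one
  let φ := PresentedGroup.toGroup hφ_rels
  let ψ := PresentedGroup.toGroup hx.isCactusFamily_sigmaOf.lift_eq_one
  have hφ : φ ∘ Cactus.minGen n = cactusσ n 1 := by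
    funext m
    rw [Function.comp_apply, Cactus.minGen]
    split_ifs with h
    · exact PresentedGroup.toGroup.of _
    · rw [map_one, cactusσ, dif_neg (by omega)]
  refine ⟨MonoidHom.toMulEquiv φ ψ ?_ ?_, fun i h => PresentedGroup.toGroup.of hφ_rels⟩
  · refine PresentedGroup.ext fun ⟨i, hi⟩ => ?_
    change ψ (φ (PresentedGroup.of ⟨i, hi⟩)) = PresentedGroup.of ⟨i, hi⟩
    have h1i : 1 ≤ 1 ∧ 1 < i ∧ i ≤ n := ⟨le_rfl, hi.1, hi.2⟩
    rw [PresentedGroup.toGroup.of, cactusσ, dif_pos h1i, PresentedGroup.toGroup.of,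
      hx.sigmaOf_one, Cactus.minGen, dif_pos hi]
  · refine PresentedGroup.ext fun g => ?_
    change φ (ψ (PresentedGroup.of g)) = _
    rw [PresentedGroup.toGroup.of, Cactus.map_sigmaOf, hφ,
      hσ.sigmaOf_one_eq g.2.1 g.2.2.1 g.2.2.2, Cactus.cactusσ_of, MonoidHom.id_apply]

/-- For every `n ≥ 2`, the cactus group `J_n` is isomorphic to the group presented by
generators `x_2, …, x_n` subject to the relations `x_i² = 1` (for `2 ≤ i ≤ n`),
`(x_k x_i x_k x_j)² = 1` (for `4 ≤ i+j ≤ k ≤ n`, `2 ≤ i ≤ j`) and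
`x_k x_{i+j} x_j x_{i+j} = x_{k-i} x_j x_{k-i} x_k` (for `3 ≤ i+j < k ≤ n`, `1 ≤ i`,
`2 ≤ j`, `i+j ≤ k-i`), via an isomorphism sending `x_i` to `σ_{1,i}`. -/
theorem cactus_minimal_presentation (n : ℕ) (hn : 2 ≤ n) :
    ∃ e : PresentedGroup (cactusMinRels n) ≃* CactusGroup n,
      ∀ (i : ℕ) (h : 2 ≤ i ∧ i ≤ n),
        e (PresentedGroup.of ⟨i, h⟩) = cactusσ n 1 i :=
  cactus_minimal_presentation_general n
end

section
/- For every n ≥ 2, the cactus group J_n cannot be generated by fewer than n − 1 elements; that is, every generating set of J_n has cardinality at least n − 1. In particular, the set {σ_{1,2}, σ_{1,3}, …, σ_{1,n}} is a generating set of J_n of minimal cardinality. -/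
/-!
Each defining relation of `J_n` preserves, modulo 2, how many generators of each width `q - p`
occur, so `σ_{p,q} ↦ e_{q-p}` is a surjection of `J_n` onto `(ℤ/2)^{n-1}`. A generating set of
`J_n` maps onto a spanning set of this `(n-1)`-dimensional space, hence has at least `n - 1`
elements. Conversely `σ_{p,q}` is the conjugate of `σ_{1,q+1-p}` by `σ_{1,q}`, so the `n - 1`
elements `σ_{1,i}` generate, and they are distinct because their images are distinct basis vectors.
-/

open Cardinal Function

section RankBound

universe u

variable {R : Type*} {V : Type u} [Ring R] [StrongRankCondition R] [AddCommGroup V] [Module R V]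

theorem rank_le_mk_of_addSubgroupClosure_eq_top {s : Set V} (hs : AddSubgroup.closure s = ⊤) :
    Module.rank R V ≤ #s := by
  have hclosure : AddSubgroup.closure s ≤ (Submodule.span R s).toAddSubgroup :=
    AddSubgroup.closure_le _ |>.2 Submodule.subset_span
  have hspan : Submodule.span R s = ⊤ := eq_top_iff.2 fun v _ ↦ hclosure (hs ▸ trivial)
  calc Module.rank R V = Module.rank R (⊤ : Submodule R V) := (rank_top R V).symm
    _ = Module.rank R (Submodule.span R s) := by rw [hspan]
    _ ≤ #s := rank_span_le s

theorem rank_le_mk_of_surjective_of_closure_eq_top {G : Type u} [Group G]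
    {f : G →* Multiplicative V} (hf : Surjective f) {S : Set G} (hS : Subgroup.closure S = ⊤) :
    Module.rank R V ≤ #S := by
  have hfS : Subgroup.closure (f '' S) = ⊤ := by
    rw [← MonoidHom.map_closure, hS, ← MonoidHom.range_eq_map, MonoidHom.range_eq_top.2 hf]
  have hclosure : AddSubgroup.closure (Multiplicative.ofAdd ⁻¹' (f '' S)) = ⊤ := by
    rw [← Subgroup.toAddSubgroup'_closure, hfS]
    rfl
  calc Module.rank R V ≤ #(Multiplicative.ofAdd ⁻¹' (f '' S)) :=
        rank_le_mk_of_addSubgroupClosure_eq_top hclosure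
    _ ≤ #(f '' S) := mk_preimage_of_injective _ _ Multiplicative.ofAdd.injective
    _ ≤ #S := mk_image_le

end RankBound

namespace CactusGen

def width {n : ℕ} (g : CactusGen n) : Fin (n - 1) :=
  ⟨g.1.2 - g.1.1 - 1, by have := g.2; omega⟩

end CactusGen

open Multiplicative

theorem cactusRels_width_trivial (n : ℕ) :
    ∀ r ∈ cactusRels n, FreeGroup.lift
      (fun g : CactusGen n ↦ ofAdd (Pi.single g.width 1 : Fin (n - 1) → ZMod 2)) r = 1 := by
  rintro r (⟨g, rfl⟩ | ⟨g, h, -, rfl⟩ | ⟨g, h, k, hp, hq, hk₁, hk₂, rfl⟩)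
  · rw [map_pow, FreeGroup.lift_apply_of, ← ofAdd_nsmul, two_nsmul, ← Pi.single_add,
      CharTwo.add_self_eq_zero, Pi.single_zero, ofAdd_zero]
  · simp only [map_mul, map_inv, FreeGroup.lift_apply_of, mul_comm, mul_inv_cancel]
  · have hwidth : k.width = h.width := by
      have := g.2; have := h.2; have := k.2
      ext; simp only [CactusGen.width]; omega
    simp only [map_mul, map_inv, FreeGroup.lift_apply_of, hwidth, mul_comm, mul_inv_cancel]

def cactusWidthHom (n : ℕ) : CactusGroup n →* Multiplicative (Fin (n - 1) → ZMod 2) :=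
  PresentedGroup.toGroup (cactusRels_width_trivial n)

theorem cactusσ_eq_of {n p q : ℕ} (h : 1 ≤ p ∧ p < q ∧ q ≤ n) :
    cactusσ n p q = PresentedGroup.of ⟨(p, q), h⟩ :=
  dif_pos h

theorem cactusWidthHom_cactusσ {n p q : ℕ} (h : 1 ≤ p ∧ p < q ∧ q ≤ n) :
    cactusWidthHom n (cactusσ n p q) = ofAdd (Pi.single ⟨q - p - 1, by omega⟩ 1) := by
  rw [cactusσ_eq_of h, cactusWidthHom, PresentedGroup.toGroup.of]
  rfl

theorem cactusWidthHom_surjective (n : ℕ) : Surjective (cactusWidthHom n) := by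
  rw [← MonoidHom.range_eq_top]
  let H := AddSubgroup.toZModSubmodule 2 (cactusWidthHom n).range.toAddSubgroup'
  have hbasis : Set.range (Pi.basisFun (ZMod 2) (Fin (n - 1))) ⊆ H := by
    rintro _ ⟨i, rfl⟩
    refine ⟨cactusσ n 1 (i + 2), ?_⟩
    rw [cactusWidthHom_cactusσ (by omega), Pi.basisFun_apply]
    rfl
  have hH : H = ⊤ := by
    rw [eq_top_iff, ← (Pi.basisFun (ZMod 2) (Fin (n - 1))).span_eq]
    exact Submodule.span_le.2 hbasis
  exact eq_top_iff.2 fun y _ ↦ hH.ge (Submodule.mem_top (x := toAdd y))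

theorem cactusσ_mul_cactusσ_of_le {n p q r s : ℕ} (hpq : 1 ≤ p ∧ p < q ∧ q ≤ n) (hpr : p ≤ r)
    (hrs : r < s) (hsq : s ≤ q) :
    cactusσ n p q * cactusσ n r s = cactusσ n (p + q - s) (p + q - r) * cactusσ n p q := by
  have hrs' : 1 ≤ r ∧ r < s ∧ s ≤ n := by omega
  have hk : 1 ≤ p + q - s ∧ p + q - s < p + q - r ∧ p + q - r ≤ n := by omega
  rw [cactusσ_eq_of hpq, cactusσ_eq_of hrs', cactusσ_eq_of hk, ← mul_inv_eq_one]
  exact PresentedGroup.one_of_mem (Or.inr (Or.inr ⟨_, _, _, hpr, hsq, rfl, rfl, rfl⟩))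

theorem closure_cactusσ_one_eq_top (n : ℕ) :
    Subgroup.closure (cactusσ n 1 '' Set.Icc 2 n) = ⊤ := by
  rw [eq_top_iff, ← PresentedGroup.closure_range_of, Subgroup.closure_le]
  rintro _ ⟨⟨⟨p, q⟩, hpq⟩, rfl⟩
  have hmem : ∀ i ∈ Set.Icc 2 n, cactusσ n 1 i ∈ Subgroup.closure (cactusσ n 1 '' Set.Icc 2 n) :=
    fun i hi ↦ Subgroup.subset_closure ⟨i, hi, rfl⟩
  rw [← cactusσ_eq_of hpq]
  obtain rfl | hp := eq_or_ne p 1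
  · exact hmem q ⟨by omega, hpq.2.2⟩
  have hconj : cactusσ n 1 q * cactusσ n p q = cactusσ n (1 + q - q) (1 + q - p) * cactusσ n 1 q :=
    cactusσ_mul_cactusσ_of_le (by omega) hpq.1 hpq.2.1 le_rfl
  rw [Nat.add_sub_cancel, ← eq_inv_mul_iff_mul_eq] at hconj
  rw [hconj]
  exact mul_mem (inv_mem (hmem q ⟨by omega, hpq.2.2⟩))
    (mul_mem (hmem _ ⟨by omega, by omega⟩) (hmem q ⟨by omega, hpq.2.2⟩))

theorem cactusσ_one_injOn (n : ℕ) : Set.InjOn (cactusσ n 1) (Set.Icc 2 n) := by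
  intro i ⟨hi, hin⟩ j ⟨hj, hjn⟩ hij
  have hsingle := congrArg (cactusWidthHom n) hij
  rw [cactusWidthHom_cactusσ (by omega), cactusWidthHom_cactusσ (by omega)] at hsingle
  have hwidth : i - 1 - 1 = j - 1 - 1 := by
    simpa [Pi.single_apply, Fin.ext_iff] using
      congrFun (ofAdd.injective hsingle) ⟨i - 1 - 1, by omega⟩
  omega

theorem mk_cactusσ_one_image (n : ℕ) : #(cactusσ n 1 '' Set.Icc 2 n) = (n - 1 : ℕ) := by
  rw [mk_image_eq_of_injOn _ _ (cactusσ_one_injOn n), mk_fintype]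
  simp

theorem cactus_minimal_number_of_generators_general (n : ℕ) :
    (∀ S : Set (CactusGroup n), Subgroup.closure S = ⊤ →
      ((n - 1 : ℕ) : Cardinal) ≤ Cardinal.mk S) ∧
    Subgroup.closure {g : CactusGroup n | ∃ i, 2 ≤ i ∧ i ≤ n ∧ g = cactusσ n 1 i} = ⊤ ∧
    Cardinal.mk {g : CactusGroup n | ∃ i, 2 ≤ i ∧ i ≤ n ∧ g = cactusσ n 1 i} =
      ((n - 1 : ℕ) : Cardinal) := by
  have himage : {g : CactusGroup n | ∃ i, 2 ≤ i ∧ i ≤ n ∧ g = cactusσ n 1 i} =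
      cactusσ n 1 '' Set.Icc 2 n := by
    ext g
    simp only [Set.mem_ofPred_eq, Set.mem_image, Set.mem_Icc, and_assoc, eq_comm]
  rw [himage]
  refine ⟨fun S hS ↦ ?_, closure_cactusσ_one_eq_top n, mk_cactusσ_one_image n⟩
  calc ((n - 1 : ℕ) : Cardinal) = Module.rank (ZMod 2) (Fin (n - 1) → ZMod 2) :=
        (rank_fin_fun _).symm
    _ ≤ #S := rank_le_mk_of_surjective_of_closure_eq_top (cactusWidthHom_surjective n) hS

/-- For every `n ≥ 2`, every generating set of the cactus group `J_n` has cardinality at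
least `n - 1`; moreover the set `{σ_{1,2}, …, σ_{1,n}}` is a generating set of `J_n` of
cardinality exactly `n - 1` (hence of minimal cardinality). -/
theorem cactus_minimal_number_of_generators (n : ℕ) (hn : 2 ≤ n) :
    (∀ S : Set (CactusGroup n), Subgroup.closure S = ⊤ →
      ((n - 1 : ℕ) : Cardinal) ≤ Cardinal.mk S) ∧
    Subgroup.closure {g : CactusGroup n | ∃ i, 2 ≤ i ∧ i ≤ n ∧ g = cactusσ n 1 i} = ⊤ ∧
    Cardinal.mk {g : CactusGroup n | ∃ i, 2 ≤ i ∧ i ≤ n ∧ g = cactusσ n 1 i} =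
      ((n - 1 : ℕ) : Cardinal) :=
  cactus_minimal_number_of_generators_general n
end

section
/- For every n ≥ 2, the cactus group J_n is isomorphic (via the identity on the generators σ_{p,q}) to the group presented by the generators σ_{p,q}, 1 ≤ p < q ≤ n, subject only to those defining relations of the standard presentation of J_n in which at least one generator of the form σ_{1,j} appears; that is, all relations of the standard presentation not involving any generator σ_{1,j} are consequences of the relations that do involve such a generator. -/
/-- The subset of the standard relators of `J_n` in which a generator of the form
`σ_{1,j}` appears at least once (i.e. some letter of the reduced word has first index `1`). -/
def cactusRelsOne (n : ℕ) : Set (FreeGroup (CactusGen n)) :=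
  { w | w ∈ cactusRels n ∧ ∃ l ∈ w.toWord, l.1.1.1 = 1 }

/-!
For `p > 1` the relation `σ_{1,q} σ_{1,q+1-p} = σ_{p,q} σ_{1,q}` of the reduced presentation
exhibits `σ_{p,q}` as the conjugate of `σ_{1,q+1-p}` by the involution `σ_{1,q}`. Conjugating by
it turns every relation with outer generator `σ_{p,q}` into a chain of three relations with outer
generators `σ_{1,q}`, `σ_{1,q+1-p}`, `σ_{1,q}`, all of which are kept in the reduced presentation.
-/

theorem SemiconjBy.of_conj_involution {G : Type*} [Group G] {a b x y y' z' z : G}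
    (ha : a ^ 2 = 1) (hx : SemiconjBy a b x) (h₁ : SemiconjBy a y y') (h₂ : SemiconjBy b y' z')
    (h₃ : SemiconjBy a z' z) : SemiconjBy x y z := by
  have ha' : a⁻¹ = a := inv_eq_of_mul_eq_one_right (by rwa [pow_two] at ha)
  have hx' : x = a * b * a⁻¹ := eq_mul_inv_of_mul_eq hx.eq.symm
  rw [ha'] at hx'
  exact hx' ▸ (h₃.mul_left h₂).mul_left h₁

theorem FreeGroup.toWord_of_mul_of_mul_inv {α : Type*} [DecidableEq α] {a b c d : α}
    (hbd : b ≠ d) :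
    (of a * of b * (of c * of d)⁻¹).toWord = [(a, true), (b, true), (d, false), (c, false)] := by
  rw [show of a * of b * (of c * of d)⁻¹ = mk [(a, true), (b, true), (d, false), (c, false)]
    from rfl, toWord_mk]
  simp [reduce, hbd]

namespace PresentedGroup

variable {α : Type*} {rels : Set (FreeGroup α)}

theorem of_pow_eq_one {a : α} {m : ℕ} (h : FreeGroup.of a ^ m ∈ rels) :
    (of a : PresentedGroup rels) ^ m = 1 :=
  one_of_mem h

theorem semiconjBy_of {a b c : α}
    (h : FreeGroup.of a * FreeGroup.of b * (FreeGroup.of c * FreeGroup.of a)⁻¹ ∈ rels) :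
    SemiconjBy (of a : PresentedGroup rels) (of b) (of c) :=
  mk_eq_mk_of_mul_inv_mem h

end PresentedGroup

abbrev ReducedCactusGroup (n : ℕ) := PresentedGroup (cactusRelsOne n)

namespace ReducedCactusGroup

def σ (n p q : ℕ) : ReducedCactusGroup n :=
  if h : 1 ≤ p ∧ p < q ∧ q ≤ n then PresentedGroup.of ⟨(p, q), h⟩ else 1

variable {n p q r s r' s' : ℕ}

theorem σ_eq_of (g : CactusGen n) : σ n g.1.1 g.1.2 = PresentedGroup.of g :=
  dif_pos g.2

theorem σ_one_sq (hq : 1 < q) (hqn : q ≤ n) : σ n 1 q ^ 2 = 1 := by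
  rw [σ, dif_pos ⟨le_rfl, hq, hqn⟩]
  refine PresentedGroup.of_pow_eq_one ⟨Or.inl ⟨_, rfl⟩, ?_⟩
  rw [FreeGroup.toWord_of_pow]
  exact ⟨_, List.mem_replicate.2 ⟨two_ne_zero, rfl⟩, rfl⟩

theorem semiconjBy_σ_one (hr : 1 ≤ r) (hrs : r < s) (hsq : s ≤ q) (hqn : q ≤ n)
    (hne : 1 < r ∨ s < q) (hr' : r' + s = 1 + q) (hs' : s' + r = 1 + q) :
    SemiconjBy (σ n 1 q) (σ n r s) (σ n r' s') := by
  rw [σ, σ, σ, dif_pos (by omega), dif_pos (by omega), dif_pos (by omega)]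
  refine PresentedGroup.semiconjBy_of ⟨Or.inr (Or.inr ⟨_, _, _, hr, hsq, by simp; omega,
    by simp; omega, rfl⟩), ?_⟩
  rw [FreeGroup.toWord_of_mul_of_mul_inv (by simp; omega)]
  exact ⟨_, List.mem_cons_self, rfl⟩

theorem commute_σ_one (hq : 1 < q) (hqr : q < r) (hrs : r < s) (hsn : s ≤ n) :
    Commute (σ n 1 q) (σ n r s) := by
  rw [σ, σ, dif_pos (by omega), dif_pos (by omega)]
  refine PresentedGroup.semiconjBy_of ⟨Or.inr (Or.inl ⟨_, _, Or.inl hqr, rfl⟩), ?_⟩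
  rw [FreeGroup.toWord_of_mul_of_mul_inv (by simp; omega)]
  exact ⟨_, List.mem_cons_self, rfl⟩

theorem semiconjBy_σ_one_σ (hp : 1 < p) (hpq : p < q) (hqn : q ≤ n) :
    SemiconjBy (σ n 1 q) (σ n 1 (q + 1 - p)) (σ n p q) :=
  semiconjBy_σ_one le_rfl (by omega) (by omega) hqn (by omega) (by omega) (by omega)

theorem σ_sq (hp : 1 ≤ p) (hpq : p < q) (hqn : q ≤ n) : σ n p q ^ 2 = 1 := by
  rcases hp.eq_or_lt with rfl | hp
  · exact σ_one_sq hpq hqn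
  · exact ((semiconjBy_σ_one_σ hp hpq hqn).pow_right 2).eq_one_iff.1
      (σ_one_sq (by omega) (by omega))

theorem commute_σ (hp : 1 ≤ p) (hpq : p < q) (hqr : q < r) (hrs : r < s) (hsn : s ≤ n) :
    Commute (σ n p q) (σ n r s) := by
  rcases hp.eq_or_lt with rfl | hp
  · exact commute_σ_one hpq hqr hrs hsn
  · exact (semiconjBy_σ_one_σ hp hpq (by omega)).of_conj_involution
      (σ_one_sq (by omega) (by omega)) (commute_σ_one (by omega) hqr hrs hsn)
      (commute_σ_one (by omega) (by omega) hrs hsn)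
      (commute_σ_one (by omega) hqr hrs hsn)

theorem semiconjBy_σ (hp : 1 ≤ p) (hpr : p ≤ r) (hrs : r < s) (hsq : s ≤ q) (hqn : q ≤ n)
    (hr' : r' + s = p + q) (hs' : s' + r = p + q) :
    SemiconjBy (σ n p q) (σ n r s) (σ n r' s') := by
  by_cases hrefl : r = p ∧ s = q
  · obtain ⟨rfl, rfl⟩ := hrefl
    obtain ⟨rfl, rfl⟩ : r' = r ∧ s' = s := by omega
    exact Commute.refl _
  rcases hp.eq_or_lt with rfl | hp
  · exact semiconjBy_σ_one hpr hrs hsq hqn (by omega) hr' hs'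
  -- reflect `[r, s]` in `[1, q]`, then in `[1, q + 1 - p]`, then in `[1, q]` again
  · exact (semiconjBy_σ_one_σ hp (by omega) hqn).of_conj_involution
      (σ_one_sq (by omega) hqn)
      (semiconjBy_σ_one (r' := q + 1 - s) (s' := q + 1 - r) (by omega) hrs hsq hqn
        (by omega) (by omega) (by omega))
      (semiconjBy_σ_one (r' := r + 1 - p) (s' := s + 1 - p) (by omega) (by omega)
        (by omega) (by omega) (by omega) (by omega) (by omega))
      (semiconjBy_σ_one (by omega) (by omega) (by omega) hqn (by omega) (by omega)
        (by omega))

theorem lift_of_eq_one_of_mem_cactusRels {w : FreeGroup (CactusGen n)} (hw : w ∈ cactusRels n) :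
    FreeGroup.lift (PresentedGroup.of : CactusGen n → ReducedCactusGroup n) w = 1 := by
  rcases hw with ⟨g, rfl⟩ | ⟨g, h, hgh, rfl⟩ | ⟨g, h, k, hgh₁, hgh₂, hk₁, hk₂, rfl⟩ <;>
    simp only [map_pow, map_mul, map_inv, FreeGroup.lift_apply_of, mul_inv_eq_one,
      ← σ_eq_of] <;>
    obtain ⟨hg₁, hg₂, hg₃⟩ := g.2
  · exact σ_sq hg₁ hg₂ hg₃
  · obtain ⟨hh₁, hh₂, hh₃⟩ := h.2
    rcases hgh with hgh | hgh
    · exact commute_σ hg₁ hg₂ hgh hh₂ hh₃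
    · exact (commute_σ hh₁ hh₂ hgh hg₂ hg₃).symm
  · exact semiconjBy_σ hg₁ hgh₁ h.2.2.1 hgh₂ hg₃ (by omega) (by omega)

end ReducedCactusGroup

theorem cactus_reduced_relations_general (n : ℕ) :
    ∃ e : PresentedGroup (cactusRelsOne n) ≃* CactusGroup n,
      ∀ g : CactusGen n, e (PresentedGroup.of g) = PresentedGroup.of g := by
  let φ : ReducedCactusGroup n →* CactusGroup n :=
    PresentedGroup.map (MonoidHom.id _) fun _ hw => hw.1
  let ψ : CactusGroup n →* ReducedCactusGroup n :=
    PresentedGroup.toGroup fun _ => ReducedCactusGroup.lift_of_eq_one_of_mem_cactusRels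
  exact ⟨MonoidHom.toMulEquiv φ ψ (PresentedGroup.ext fun _ => rfl)
    (PresentedGroup.ext fun _ => rfl), fun _ => rfl⟩

/-- For every `n ≥ 2`, the cactus group `J_n` is isomorphic, via the identity on the
generators `σ_{p,q}`, to the group presented by the same generators subject only to those
defining relations of the standard presentation in which some generator `σ_{1,j}` appears. -/
theorem cactus_reduced_relations (n : ℕ) (hn : 2 ≤ n) :
    ∃ e : PresentedGroup (cactusRelsOne n) ≃* CactusGroup n,
      ∀ g : CactusGen n, e (PresentedGroup.of g) = PresentedGroup.of g :=
  cactus_reduced_relations_general n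
end

section
/- For every n ≥ 3, there exists a surjective group homomorphism φ from the cactus group J_n onto the dihedral group D_4 of order 8 determined on the generators σ_i := σ_{1,i} (2 ≤ i ≤ n) by: φ(σ_i) = 1 if i < ⌊(n+1)/2⌋; φ(σ_i) = a if i ≡ 0 (mod 2) and i ≥ ⌊(n+1)/2⌋; and φ(σ_i) = b if i ≡ 1 (mod 2) and i ≥ ⌊(n+1)/2⌋, where a and b are two reflections in D_4 whose product ab has order 4 (so that a² = b² = (ab)⁴ = 1 and a, b generate D_4). -/
/-!
Send `σ_{p,q}` to `1` when `[p,q]` has fewer than `⌊(n+1)/2⌋` points, and otherwise to the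
reflection `sr c` of `D_4` with label `c = 2(p+1) + ((p+q+1) mod 2) ∈ ℤ/4`; on `σ_{1,i}` the
label is `i mod 2`. Two long intervals of `[1,n]` can only be disjoint if they are the two halves
of `[1,n]`, whose labels have the same parity, so their reflections commute. Reflecting a
subinterval `[r,s]` inside `[p,q]` preserves its length, and the labels satisfy
`c(r,s) + c(p+q-s, p+q-r) = 2 c(p,q)`, which is the conjugation relation
`sr c * sr x * sr c = sr (2c - x)`.
-/

open DihedralGroup

theorem DihedralGroup.closure_sr_zero_sr_one {n : ℕ} :
    Subgroup.closure ({sr 0, sr 1} : Set (DihedralGroup n)) = ⊤ := by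
  set H := Subgroup.closure ({sr 0, sr 1} : Set (DihedralGroup n))
  have h0 : sr 0 ∈ H := Subgroup.subset_closure (Set.mem_insert _ _)
  have h1 : sr 1 ∈ H := Subgroup.subset_closure (Set.mem_insert_of_mem _ rfl)
  have hr : ∀ j : ZMod n, r j ∈ H := fun j => by
    have hr1 : r 1 ∈ H := by simpa [sr_mul_sr] using mul_mem h0 h1
    simpa [r_one_zpow, ZMod.intCast_zmod_cast] using zpow_mem hr1 (ZMod.cast j : ℤ)
  rw [eq_top_iff]
  rintro (j | j) -
  · exact hr j
  · simpa [sr_mul_r] using mul_mem h0 (hr j)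

namespace CactusGroup

variable {n : ℕ}

theorem rels_lift_eq_one {G : Type*} [Group G] (f : CactusGen n → G)
    (sq : ∀ g, f g ^ 2 = 1)
    (comm : ∀ g h : CactusGen n, g.1.2 < h.1.1 ∨ h.1.2 < g.1.1 → f g * f h = f h * f g)
    (nest : ∀ g h k : CactusGen n, g.1.1 ≤ h.1.1 → h.1.2 ≤ g.1.2 →
      k.1.1 = g.1.1 + g.1.2 - h.1.2 → k.1.2 = g.1.1 + g.1.2 - h.1.1 → f g * f h = f k * f g) :
    ∀ w ∈ cactusRels n, FreeGroup.lift f w = 1 := by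
  rintro w (⟨g, rfl⟩ | ⟨g, h, hgh, rfl⟩ | ⟨g, h, k, h₁, h₂, h₃, h₄, rfl⟩) <;>
    simp only [map_pow, map_mul, map_inv, FreeGroup.lift_apply_of, mul_inv_eq_one]
  exacts [sq g, comm g h hgh, nest g h k h₁ h₂ h₃ h₄]

def d4Label (p q : ℕ) : ZMod 4 := ((2 * (p + 1) + (p + q + 1) % 2 : ℕ) : ZMod 4)

theorem two_mul_d4Label_eq {p q u v : ℕ} (h : (p + q) % 2 = (u + v) % 2) :
    2 * d4Label p q = 2 * d4Label u v := by
  unfold d4Label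
  norm_cast
  rw [ZMod.natCast_eq_natCast_iff']
  omega

theorem d4Label_add_d4Label_eq {p q u v k l : ℕ} (hk : k + v = p + q) (hl : l + u = p + q) :
    d4Label u v + d4Label k l = 2 * d4Label p q := by
  unfold d4Label
  norm_cast
  rw [ZMod.natCast_eq_natCast_iff']
  rcases Nat.mod_two_eq_zero_or_one (p + q) with hpq | hpq <;>
    rcases Nat.mod_two_eq_zero_or_one (u + v) with huv | huv <;> omega

theorem d4Label_one (i : ℕ) : d4Label 1 i = ((i % 2 : ℕ) : ZMod 4) := by
  rw [d4Label, ZMod.natCast_eq_natCast_iff']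
  omega

def d4Gen (n : ℕ) (g : CactusGen n) : DihedralGroup 4 :=
  if (n + 1) / 2 + g.1.1 ≤ g.1.2 + 1 then sr (d4Label g.1.1 g.1.2) else 1

theorem d4Gen_sq (g : CactusGen n) : d4Gen n g ^ 2 = 1 := by
  unfold d4Gen
  split_ifs <;> simp [sq]

theorem d4Gen_comm : ∀ g h : CactusGen n, g.1.2 < h.1.1 ∨ h.1.2 < g.1.1 →
    d4Gen n g * d4Gen n h = d4Gen n h * d4Gen n g := by
  rintro ⟨⟨p, q⟩, hp, _, hq⟩ ⟨⟨u, v⟩, hu, _, hv⟩ hdisj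
  simp only [d4Gen] at hp hq hu hv hdisj ⊢
  split_ifs with hg hh
  · have hpar : (p + q) % 2 = (u + v) % 2 := by omega
    rw [sr_mul_sr, sr_mul_sr, r.injEq]
    linear_combination (two_mul_d4Label_eq hpar).symm
  all_goals simp only [mul_one, one_mul]

theorem d4Gen_nest : ∀ g h k : CactusGen n, g.1.1 ≤ h.1.1 → h.1.2 ≤ g.1.2 →
    k.1.1 = g.1.1 + g.1.2 - h.1.2 → k.1.2 = g.1.1 + g.1.2 - h.1.1 →
    d4Gen n g * d4Gen n h = d4Gen n k * d4Gen n g := by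
  rintro ⟨⟨p, q⟩, _⟩ ⟨⟨u, v⟩, _, huv, _⟩ ⟨⟨k, l⟩, _⟩ hpu hvq hk hl
  simp only [d4Gen] at huv hpu hvq hk hl ⊢
  by_cases hh : (n + 1) / 2 + u ≤ v + 1
  · rw [if_pos hh, if_pos (by omega), if_pos (by omega), sr_mul_sr, sr_mul_sr, r.injEq]
    linear_combination
      d4Label_add_d4Label_eq (p := p) (q := q) (u := u) (v := v) (k := k) (l := l)
        (by omega) (by omega)
  · rw [if_neg hh, if_neg (show ¬(n + 1) / 2 + k ≤ l + 1 by omega), mul_one, one_mul]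

def toD4 (n : ℕ) : CactusGroup n →* DihedralGroup 4 :=
  PresentedGroup.toGroup (rels_lift_eq_one (d4Gen n) d4Gen_sq d4Gen_comm d4Gen_nest)

theorem toD4_σ_one {i : ℕ} (hi : 2 ≤ i) (hin : i ≤ n) :
    toD4 n (cactusσ n 1 i) =
      if i < (n + 1) / 2 then 1 else if i % 2 = 0 then sr 0 else sr 1 := by
  rw [cactusσ, dif_pos ⟨le_rfl, hi, hin⟩, toD4, PresentedGroup.toGroup.of, d4Gen]
  dsimp only
  by_cases hlt : i < (n + 1) / 2
  · rw [if_pos hlt, if_neg (by omega)]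
  · rw [if_neg hlt, if_pos (by omega), d4Label_one]
    rcases Nat.mod_two_eq_zero_or_one i with h | h <;> simp [h]

theorem toD4_surjective (hn : 3 ≤ n) : Function.Surjective (toD4 n) := by
  have h_top : ∀ i, n - 1 ≤ i → i ≤ n →
      toD4 n (cactusσ n 1 i) = if i % 2 = 0 then sr 0 else sr 1 := fun i h₁ h₂ => by
    rw [toD4_σ_one (by omega) h₂, if_neg (by omega)]
  rw [← MonoidHom.range_eq_top, eq_top_iff, ← closure_sr_zero_sr_one, Subgroup.closure_le]
  rintro _ (rfl | rfl)
  · exact ⟨cactusσ n 1 (n - n % 2), by rw [h_top _ (by omega) (by omega), if_pos (by omega)]⟩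
  · exact ⟨cactusσ n 1 (n - 1 + n % 2), by
      rw [h_top _ (by omega) (by omega), if_neg (by omega)]⟩

end CactusGroup

/-- For every `n ≥ 3`, there is a surjective homomorphism `φ : J_n → D_4` (dihedral group
of order 8) sending `σ_{1,i}` to `1` if `i < ⌊(n+1)/2⌋`, to `a` if `i` is even and
`i ≥ ⌊(n+1)/2⌋`, and to `b` if `i` is odd and `i ≥ ⌊(n+1)/2⌋`, where `a`, `b` are two
reflections of `D_4` (i.e. `a² = b² = 1`) whose product `a*b` has order `4` and which
generate `D_4`. -/
theorem cactus_to_D4 (n : ℕ) (hn : 3 ≤ n) :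
    ∃ a b : DihedralGroup 4, a ^ 2 = 1 ∧ b ^ 2 = 1 ∧ orderOf (a * b) = 4 ∧
      Subgroup.closure {a, b} = ⊤ ∧
      ∃ φ : CactusGroup n →* DihedralGroup 4, Function.Surjective φ ∧
        ∀ i : ℕ, 2 ≤ i → i ≤ n →
          φ (cactusσ n 1 i) =
            if i < (n + 1) / 2 then 1
            else if i % 2 = 0 then a
            else b := by
  refine ⟨sr 0, sr 1, by rw [sq, sr_mul_self], by rw [sq, sr_mul_self], ?_,
    closure_sr_zero_sr_one, CactusGroup.toD4 n, CactusGroup.toD4_surjective hn,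
    fun i hi hin => CactusGroup.toD4_σ_one hi hin⟩
  rw [sr_mul_sr, sub_zero, orderOf_r_one]
end

section
/- For every n ≥ 2, there exists a group homomorphism ψ from the cactus group J_{2n−1} to the dihedral group D_8 of order 16 determined on the generators σ_i := σ_{1,i} (2 ≤ i ≤ 2n−1) by: ψ(σ_i) = a if i = n; ψ(σ_i) = b if i ≥ n+1 and i ≡ n+1 (mod 2); and ψ(σ_i) = 1 otherwise, where a and b are two reflections in D_8 whose product ab has order 8. Moreover ψ is surjective. -/
/-!
Any homomorphism with the prescribed values sends `σ_{p,q} = σ_q σ_{q+1-p} σ_q` to `1` when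
`[p, q]` is shorter than `n`, to `a` or `bab` (according to the parity of `p`) when it has
length `n`, and to `1` or `b` (according to the parity of its length) when it is longer. These
elements are involutions. Two disjoint subintervals of `[1, 2n-1]` cannot both have length
`≥ n`, so the commutation relations hold trivially. In the nested relation the only nontrivial
case is an interval of length `n` inside a longer one: reflecting it changes the parity of its
left end exactly when the outer generator goes to `b`, and then `b a b` is the image of the
reflected generator. Finally `a = ψ σ_n` and `b = ψ σ_{n+1}` generate `D_8`, since `ab` is a
rotation of order `8`.
-/

namespace DihedralGroup

theorem closure_sr_zero_sr_one_s5 (n : ℕ) :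
    Subgroup.closure {sr 0, sr 1} = (⊤ : Subgroup (DihedralGroup n)) := by
  set H := Subgroup.closure {(sr 0 : DihedralGroup n), sr 1}
  have hsr0 : sr 0 ∈ H := Subgroup.subset_closure (Set.mem_insert _ _)
  have hr1 : r 1 ∈ H := by
    rw [← sub_zero (1 : ZMod n), ← sr_mul_sr]
    exact mul_mem hsr0 (Subgroup.subset_closure (Set.mem_insert_of_mem _ rfl))
  have hr (j : ZMod n) : r j ∈ H := by
    simpa only [r_one_zpow, ZMod.intCast_zmod_cast] using zpow_mem hr1 (ZMod.cast j : ℤ)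
  refine eq_top_iff.mpr fun x _ => ?_
  cases x with
  | r j => exact hr j
  | sr j => simpa only [sr_mul_r, zero_add] using mul_mem hsr0 (hr j)

end DihedralGroup

namespace CactusGroup

variable {G : Type*} [Group G] {a b : G} {n p q r s : ℕ}

/-- The image of `σ_{p,q}`, namely that of `σ_q σ_{q+1-p} σ_q`. -/
def dihedralGen (n : ℕ) (a b : G) (p q : ℕ) : G :=
  if q + 1 - p = n then (if p % 2 = 1 then a else b * a * b)
  else if n + 1 ≤ q + 1 - p ∧ (q + 1 - p) % 2 = (n + 1) % 2 then b
  else 1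

theorem dihedralGen_of_lt (h : q + 1 - p < n) : dihedralGen n a b p q = 1 := by
  rw [dihedralGen, if_neg (by omega), if_neg (by omega)]

theorem dihedralGen_of_eq (h : q + 1 - p = n) :
    dihedralGen n a b p q = if p % 2 = 1 then a else b * a * b := by
  rw [dihedralGen, if_pos h]

theorem dihedralGen_of_gt (h : n < q + 1 - p) :
    dihedralGen n a b p q = if (q + 1 - p) % 2 = (n + 1) % 2 then b else 1 := by
  rw [dihedralGen, if_neg (by omega)]
  exact if_congr (and_iff_right h) rfl rfl

theorem dihedralGen_mul_self (ha : a * a = 1) (hb : b * b = 1) (p q : ℕ) :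
    dihedralGen n a b p q * dihedralGen n a b p q = 1 := by
  have hbab : b * a * b * (b * a * b) = 1 :=
    calc b * a * b * (b * a * b) = b * (a * (b * b) * a) * b := by group
      _ = 1 := by rw [hb, mul_one, ha, mul_one, hb]
  unfold dihedralGen
  split_ifs <;> first | exact ha | exact hb | exact hbab | exact mul_one 1

theorem dihedralGen_commute_of_disjoint (hp : 1 ≤ p) (hpq : p < q) (hq : q ≤ 2 * n - 1)
    (hr : 1 ≤ r) (hs : s ≤ 2 * n - 1) (hdisj : q < r ∨ s < p) :
    Commute (dihedralGen n a b p q) (dihedralGen n a b r s) := by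
  rcases Nat.lt_or_ge (q + 1 - p) n with h | h
  · rw [dihedralGen_of_lt h]; exact Commute.one_left _
  · rw [dihedralGen_of_lt (by omega : s + 1 - r < n)]; exact Commute.one_right _

theorem dihedralGen_mul_of_le (hb : b * b = 1) (hpr : p ≤ r) (hrs : r < s) (hsq : s ≤ q) :
    dihedralGen n a b p q * dihedralGen n a b r s =
      dihedralGen n a b (p + q - s) (p + q - r) * dihedralGen n a b p q := by
  have hlen : p + q - r + 1 - (p + q - s) = s + 1 - r := by omega
  have hb' : ∀ x, b * (b * x) = x := fun x ↦ by rw [← mul_assoc, hb, one_mul]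
  rcases lt_trichotomy (s + 1 - r) n with hl | hl | hl
  · rw [dihedralGen_of_lt hl, dihedralGen_of_lt (hlen.trans_lt hl), mul_one, one_mul]
  · rcases eq_or_lt_of_le (show n ≤ q + 1 - p by omega) with hL | hL
    · obtain ⟨rfl, rfl⟩ : r = p ∧ s = q := by omega
      rw [Nat.add_sub_cancel, Nat.add_sub_cancel_left]
    · rw [dihedralGen_of_eq hl, dihedralGen_of_eq (hlen.trans hl), dihedralGen_of_gt hL]
      split_ifs <;> first | omega | simp only [mul_assoc, hb, hb', mul_one, one_mul]
  · rw [dihedralGen_of_gt hl, dihedralGen_of_gt (hl.trans_eq hlen.symm), hlen,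
      dihedralGen_of_gt (by omega)]
    split_ifs <;> simp only [mul_one, one_mul]

theorem lift_dihedralGen_eq_one_of_mem_cactusRels (ha : a * a = 1) (hb : b * b = 1) :
    ∀ w ∈ cactusRels (2 * n - 1),
      FreeGroup.lift (fun g : CactusGen (2 * n - 1) ↦ dihedralGen n a b g.1.1 g.1.2) w = 1 := by
  rintro w (⟨g, rfl⟩ | ⟨⟨⟨p, q⟩, hp, hpq, hq⟩, ⟨⟨r, s⟩, hr, _, hs⟩, hdisj, rfl⟩ |
    ⟨⟨⟨p, q⟩, _⟩, ⟨⟨r, s⟩, _, hrs, _⟩, ⟨⟨u, v⟩, _⟩, hpr, hsq, rfl, rfl, rfl⟩)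
  · simpa only [pow_two, map_mul, FreeGroup.lift_apply_of] using dihedralGen_mul_self ha hb _ _
  · simpa only [map_mul, map_inv, FreeGroup.lift_apply_of, mul_inv_eq_one] using
      (dihedralGen_commute_of_disjoint hp hpq hq hr hs hdisj).eq
  · simpa only [map_mul, map_inv, FreeGroup.lift_apply_of, mul_inv_eq_one] using
      dihedralGen_mul_of_le hb hpr hrs hsq

variable (n) in
def toDihedral (ha : a * a = 1) (hb : b * b = 1) : CactusGroup (2 * n - 1) →* G :=
  PresentedGroup.toGroup (lift_dihedralGen_eq_one_of_mem_cactusRels ha hb)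

theorem toDihedral_cactusσ (ha : a * a = 1) (hb : b * b = 1) (hp : 1 ≤ p) (hpq : p < q)
    (hq : q ≤ 2 * n - 1) :
    toDihedral n ha hb (cactusσ (2 * n - 1) p q) = dihedralGen n a b p q := by
  rw [cactusσ, dif_pos ⟨hp, hpq, hq⟩, toDihedral, PresentedGroup.toGroup.of]

theorem toDihedral_cactusσ_one (ha : a * a = 1) (hb : b * b = 1) {i : ℕ} (hi : 2 ≤ i)
    (hin : i ≤ 2 * n - 1) :
    toDihedral n ha hb (cactusσ (2 * n - 1) 1 i) =
      if i = n then a else if n + 1 ≤ i ∧ i % 2 = (n + 1) % 2 then b else 1 := by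
  rw [toDihedral_cactusσ ha hb le_rfl hi hin, dihedralGen, Nat.add_sub_cancel, if_pos rfl]

theorem closure_le_range_toDihedral (ha : a * a = 1) (hb : b * b = 1) (hn : 2 ≤ n) :
    Subgroup.closure {a, b} ≤ (toDihedral n ha hb).range := by
  refine (Subgroup.closure_le _).mpr (Set.insert_subset_iff.mpr ⟨⟨cactusσ _ 1 n, ?_⟩, ?_⟩)
  · rw [toDihedral_cactusσ_one ha hb hn (by omega), if_pos rfl]
  · refine Set.singleton_subset_iff.mpr ⟨cactusσ _ 1 (n + 1), ?_⟩
    rw [toDihedral_cactusσ_one ha hb (by omega) (by omega), if_neg (by omega),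
      if_pos ⟨le_rfl, rfl⟩]

end CactusGroup

open DihedralGroup CactusGroup in
/-- For every `n ≥ 2`, there is a surjective homomorphism `ψ : J_{2n-1} → D_8` (dihedral
group of order 16) sending `σ_{1,i}` to `a` if `i = n`, to `b` if `i ≥ n+1` and
`i ≡ n+1 (mod 2)`, and to `1` otherwise, where `a`, `b` are two reflections of `D_8`
(i.e. `a² = b² = 1`) whose product `a*b` has order `8`. -/
theorem cactus_to_D8 (n : ℕ) (hn : 2 ≤ n) :
    ∃ a b : DihedralGroup 8, a ^ 2 = 1 ∧ b ^ 2 = 1 ∧ orderOf (a * b) = 8 ∧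
      ∃ ψ : CactusGroup (2 * n - 1) →* DihedralGroup 8, Function.Surjective ψ ∧
        ∀ i : ℕ, 2 ≤ i → i ≤ 2 * n - 1 →
          ψ (cactusσ (2 * n - 1) 1 i) =
            if i = n then a
            else if n + 1 ≤ i ∧ i % 2 = (n + 1) % 2 then b
            else 1 := by
  have hab : sr 0 * sr 1 = (r 1 : DihedralGroup 8) := by rw [sr_mul_sr, sub_zero]
  let ψ := toDihedral n (sr_mul_self (0 : ZMod 8)) (sr_mul_self (1 : ZMod 8))
  have hψ : Function.Surjective ψ := by
    rw [← MonoidHom.range_eq_top, eq_top_iff, ← closure_sr_zero_sr_one_s5 8]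
    exact closure_le_range_toDihedral _ _ hn
  refine ⟨sr 0, sr 1, (sq _).trans (sr_mul_self 0), (sq _).trans (sr_mul_self 1),
    hab ▸ orderOf_r_one, ψ, hψ, fun i hi hin ↦ toDihedral_cactusσ_one _ _ hi hin⟩
end

section
/- Let n ≥ 2 and let 2 ≤ i, j ≤ n with i ≡ j (mod 2). Then the commutator [σ_i, σ_j] of the generators σ_i := σ_{1,i} and σ_j := σ_{1,j} of the cactus group J_n belongs to Γ_3(J_n). -/
open scoped commutatorElement

/-!
Write `i ≤ j` and `j - i = 2m`. The interval `[m+1, m+i]` sits in the middle of `[1, j]`, so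
`t = σ_{m+1,m+i}` commutes with `σ_{1,j}`; and `σ_{1,m+i}` conjugates `σ_{1,i}` to `t`. Hence
`σ_{1,i} ≡ t` modulo `Γ₂`, and commuting with `σ_{1,j}` pushes `[σ_{1,i}, σ_{1,j}]` into `Γ₃`.
-/

theorem commutatorElement_mem_lowerCentralSeries_two_of_isConj_of_commute {G : Type*} [Group G]
    {a b t : G} (hta : IsConj t a) (htb : Commute t b) :
    ⁅a, b⁆ ∈ (⊤ : Subgroup G).lowerCentralSeries 2 := by
  obtain ⟨c, hc⟩ := isConj_iff.mp hta
  have ha : a = t * ⁅t⁻¹, c⁆ := by rw [← hc, commutatorElement_def]; group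
  have hk : ⁅t⁻¹, c⁆ ∈ (⊤ : Subgroup G).lowerCentralSeries 1 :=
    Subgroup.commutator_mem_commutator (Subgroup.mem_top _) (Subgroup.mem_top _)
  have hconj : ⁅a, b⁆ = t * ⁅⁅t⁻¹, c⁆, b⁆ * t⁻¹ := by
    rw [ha]
    simp only [commutatorElement_def, mul_inv_rev, mul_assoc, htb.inv_inv.eq]
  rw [hconj]
  exact (Subgroup.lowerCentralSeries_normal ⊤ 2).conj_mem _
    (Subgroup.commutator_mem_commutator hk (Subgroup.mem_top b)) t

section CactusGroup

variable {n p q r s : ℕ}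

theorem cactusσ_mul_cactusσ_of_nested (hp : 1 ≤ p) (hpr : p ≤ r) (hrs : r < s) (hsq : s ≤ q)
    (hq : q ≤ n) :
    cactusσ n p q * cactusσ n r s = cactusσ n (p + q - s) (p + q - r) * cactusσ n p q := by
  have hg : 1 ≤ p ∧ p < q ∧ q ≤ n := by omega
  have hh : 1 ≤ r ∧ r < s ∧ s ≤ n := by omega
  have hk : 1 ≤ p + q - s ∧ p + q - s < p + q - r ∧ p + q - r ≤ n := by omega
  simp only [cactusσ, dif_pos hg, dif_pos hh, dif_pos hk]
  exact PresentedGroup.mk_eq_mk_of_mul_inv_mem <|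
    Or.inr <| Or.inr ⟨⟨(p, q), hg⟩, ⟨(r, s), hh⟩, ⟨(p + q - s, p + q - r), hk⟩,
      hpr, hsq, rfl, rfl, rfl⟩

theorem isConj_cactusσ_of_nested (hp : 1 ≤ p) (hpr : p ≤ r) (hrs : r < s) (hsq : s ≤ q)
    (hq : q ≤ n) : IsConj (cactusσ n r s) (cactusσ n (p + q - s) (p + q - r)) :=
  isConj_iff.mpr ⟨cactusσ n p q, by
    rw [cactusσ_mul_cactusσ_of_nested hp hpr hrs hsq hq, mul_inv_cancel_right]⟩

theorem commute_cactusσ_of_centered (hp : 1 ≤ p) (hpr : p ≤ r) (hrs : r < s) (hsq : s ≤ q)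
    (hq : q ≤ n) (hcenter : r + s = p + q) : Commute (cactusσ n p q) (cactusσ n r s) := by
  have h := cactusσ_mul_cactusσ_of_nested hp hpr hrs hsq hq
  rwa [show p + q - s = r by omega, show p + q - r = s by omega] at h

theorem commutatorElement_cactusσ_mem_lowerCentralSeries_two_of_le {i j : ℕ} (hi : 2 ≤ i)
    (hij : i ≤ j) (hj : j ≤ n) (hpar : i % 2 = j % 2) :
    ⁅cactusσ n 1 i, cactusσ n 1 j⁆ ∈ (⊤ : Subgroup (CactusGroup n)).lowerCentralSeries 2 := by
  obtain ⟨m, rfl⟩ : ∃ m, j = i + 2 * m := ⟨(j - i) / 2, by omega⟩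
  have hconj : IsConj (cactusσ n 1 i) (cactusσ n (m + 1) (m + i)) := by
    have h := isConj_cactusσ_of_nested (n := n) (p := 1) (q := m + i) (r := 1) (s := i) le_rfl
      le_rfl (by omega) (by omega) (by omega)
    rwa [show 1 + (m + i) - i = m + 1 by omega, show 1 + (m + i) - 1 = m + i by omega] at h
  have hcomm : Commute (cactusσ n 1 (i + 2 * m)) (cactusσ n (m + 1) (m + i)) :=
    commute_cactusσ_of_centered le_rfl (by omega) (by omega) (by omega) hj (by omega)
  exact commutatorElement_mem_lowerCentralSeries_two_of_isConj_of_commute hconj.symm hcomm.symm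

end CactusGroup

theorem cactus_commutator_in_gamma3_of_same_parity_general (n i j : ℕ)
    (hi : 2 ≤ i) (hi' : i ≤ n) (hj : 2 ≤ j) (hj' : j ≤ n) (hpar : i % 2 = j % 2) :
    ⁅cactusσ n 1 i, cactusσ n 1 j⁆ ∈ (⊤ : Subgroup (CactusGroup n)).lowerCentralSeries 2 := by
  rcases le_total i j with hij | hji
  · exact commutatorElement_cactusσ_mem_lowerCentralSeries_two_of_le hi hij hj' hpar
  · rw [← commutatorElement_inv]
    exact Subgroup.inv_mem _ <|
      commutatorElement_cactusσ_mem_lowerCentralSeries_two_of_le hj hji hi' hpar.symm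

/-- If `2 ≤ i, j ≤ n` and `i ≡ j (mod 2)`, then the commutator `[σ_{1,i}, σ_{1,j}]`
belongs to `Γ₃(J_n) = lowerCentralSeries (CactusGroup n) 2`. -/
theorem cactus_commutator_in_gamma3_of_same_parity (n i j : ℕ) (hn : 2 ≤ n)
    (hi : 2 ≤ i) (hi' : i ≤ n) (hj : 2 ≤ j) (hj' : j ≤ n) (hpar : i % 2 = j % 2) :
    ⁅cactusσ n 1 i, cactusσ n 1 j⁆ ∈ (⊤ : Subgroup (CactusGroup n)).lowerCentralSeries 2 :=
  cactus_commutator_in_gamma3_of_same_parity_general n i j hi hi' hj hj' hpar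
end

section
/- For every n ≥ 3, the quotient J_n/Γ_3(J_n) of the cactus group is isomorphic to the group presented by generators x_2, …, x_n subject to the relations: x_i² = 1 for 2 ≤ i ≤ n; [x_i, x_j] = 1 whenever i < ⌊(n+1)/2⌋ or j ≡ i (mod 2); [[x_i, x_j], x_k] = 1 for all 2 ≤ i, j, k ≤ n; and [x_i, x_j] = [x_i, x_k] for all 2 ≤ i ≤ j, k ≤ n with k ≡ j (mod 2); via an isomorphism sending x_i to the class of σ_{1,i}. -/
open scoped commutatorElement

/-- Relators of the presentation of `J_n/Γ₃(J_n)` on generators `x_i` (`2 ≤ i ≤ n`):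
`x_i² = 1`; `[x_i, x_j] = 1` if `i < ⌊(n+1)/2⌋` or `j ≡ i (mod 2)`;
`[[x_i, x_j], x_k] = 1`; and `[x_i, x_j] = [x_i, x_k]` for `i ≤ j`, `i ≤ k`,
`k ≡ j (mod 2)`. -/
def cactusModGamma3Rels (n : ℕ) : Set (FreeGroup {i : ℕ // 2 ≤ i ∧ i ≤ n}) :=
  { w | (∃ g : {i : ℕ // 2 ≤ i ∧ i ≤ n}, w = FreeGroup.of g ^ 2) ∨
    (∃ gi gj : {i : ℕ // 2 ≤ i ∧ i ≤ n}, (gi.1 < (n + 1) / 2 ∨ gj.1 % 2 = gi.1 % 2) ∧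
      w = ⁅FreeGroup.of gi, FreeGroup.of gj⁆) ∨
    (∃ gi gj gk : {i : ℕ // 2 ≤ i ∧ i ≤ n},
      w = ⁅⁅FreeGroup.of gi, FreeGroup.of gj⁆, FreeGroup.of gk⁆) ∨
    (∃ gi gj gk : {i : ℕ // 2 ≤ i ∧ i ≤ n},
      gi.1 ≤ gj.1 ∧ gi.1 ≤ gk.1 ∧ gk.1 % 2 = gj.1 % 2 ∧
      w = ⁅FreeGroup.of gi, FreeGroup.of gj⁆ * (⁅FreeGroup.of gi, FreeGroup.of gk⁆)⁻¹) }

/-!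
Modulo `Γ₃` every commutator is central, so commutators are bimultiplicative and
`⁅a, b⁆ = ⁅b, a⁆` whenever `a` is an involution. In `J_n` one has
`σ_{p,q} = σ_{1,q} σ_{1,q-p+1} σ_{1,q}`, so the classes `x_m` of `σ_{1,m}` generate the quotient.
In these terms the disjoint commutation of `σ_{p,q}` and `σ_{r,s}` reads
`⁅x_{q-p+1}, x_{s-r+1}⁆ = 1`, and the nesting relation becomes the star relation
`⁅x_i, x_j⁆ ⁅x_i, x_k⁆ = ⁅x_i, x_l⁆` for `(i, j, k, l) = (s-r+1, s, q-p+1, p+q-r)`.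
Well-chosen star relations yield the relations of `cactusModGamma3Rels`, and conversely these
relations imply every star relation by a parity case analysis, so `x_m ↦ σ_{1,m}` and
`σ_{p,q} ↦ x_q x_{q-p+1} x_q` are mutually inverse.
-/

section

open Subgroup

variable {G : Type*} [Group G]

theorem commutatorElement_mem_center_of_closure_eq_top {S : Set G} (hS : closure S = ⊤)
    (hS₃ : ∀ s ∈ S, ∀ t ∈ S, ∀ u ∈ S, ⁅⁅s, t⁆, u⁆ = 1) (a b : G) : ⁅a, b⁆ ∈ center G := by
  have hST : ∀ s ∈ S, ∀ t ∈ S, ⁅s, t⁆ ∈ center G := by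
    intro s hs t ht
    rw [← centralizer_univ, ← coe_top, ← hS, centralizer_closure]
    exact fun u hu => (commutatorElement_eq_one_iff_mul_comm.mp (hS₃ s hs t ht u hu)).symm
  -- Modulo the centre the generators commute pairwise, so the quotient is abelian.
  let π := QuotientGroup.mk' (center G)
  have hπS : closure (π '' S) = ⊤ := by
    rw [← MonoidHom.map_closure, hS, ← MonoidHom.range_eq_map, MonoidHom.range_eq_top]
    exact QuotientGroup.mk'_surjective _
  have hcomm : π '' S ⊆ centralizer (π '' S) := by
    rintro _ ⟨t, ht, rfl⟩ _ ⟨s, hs, rfl⟩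
    rw [← commutatorElement_eq_one_iff_mul_comm, ← map_commutatorElement]
    exact (QuotientGroup.eq_one_iff _).mpr (hST s hs t ht)
  have hπb : π b ∈ centralizer (π '' S) := (closure_le _).mpr hcomm (hπS ▸ mem_top (π b))
  rw [← centralizer_closure, hπS, coe_top, centralizer_univ] at hπb
  rw [← QuotientGroup.eq_one_iff, ← QuotientGroup.mk'_apply, map_commutatorElement,
    commutatorElement_eq_one_iff_mul_comm]
  exact mem_center_iff.mp hπb (π a)

theorem commutatorElement_mem_center_quotient_lowerCentralSeries_two
    (a b : G ⧸ (⊤ : Subgroup G).lowerCentralSeries 2) : ⁅a, b⁆ ∈ center _ := by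
  induction a using QuotientGroup.induction_on with | H a => ?_
  induction b using QuotientGroup.induction_on with | H b => ?_
  refine mem_center_iff.mpr fun z => ?_
  induction z using QuotientGroup.induction_on with | H z => ?_
  have h : ⁅⁅a, b⁆, z⁆ ∈ (⊤ : Subgroup G).lowerCentralSeries 2 :=
    commutator_mem_commutator (commutator_mem_commutator (mem_top a) (mem_top b)) (mem_top z)
  rw [← QuotientGroup.eq_one_iff] at h
  exact (commutatorElement_eq_one_iff_mul_comm.mp h).symm

theorem lowerCentralSeries_two_le_ker {K : Type*} [Group K] (hK : ∀ a b : K, ⁅a, b⁆ ∈ center K)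
    (f : G →* K) : (⊤ : Subgroup G).lowerCentralSeries 2 ≤ f.ker := by
  rw [← Subgroup.map_eq_bot_iff, map_lowerCentralSeries, eq_bot_iff]
  refine (lowerCentralSeries_mono 2 le_top).trans (Subgroup.lowerCentralSeries_succ_eq_bot ⊤ ?_).le
  rw [top_lowerCentralSeries_one, commutator_def]
  exact commutator_le.mpr fun a _ b _ => hK a b

theorem conj_mul_self_eq_one {a b : G} (ha : a * a = 1) (hb : b * b = 1) :
    a * b * a * (a * b * a) = 1 := by
  rw [show a * b * a * (a * b * a) = a * (b * (a * a) * b) * a by group, ha, mul_one, hb,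
    mul_one, ha]

/-- In `J_n` one has `σ_{p,q} = σ_{1,q} σ_{1,q-p+1} σ_{1,q}` (`cactusσ_eq_cactusWord`); this is
that word in an arbitrary family `x m` standing for `σ_{1,m}`. -/
def cactusWord (x : ℕ → G) (p q : ℕ) : G := x q * x (q - p + 1) * x q

variable {x : ℕ → G}

theorem cactusWord_mul_self (hx : ∀ m, x m * x m = 1) (p q : ℕ) :
    cactusWord x p q * cactusWord x p q = 1 :=
  conj_mul_self_eq_one (hx _) (hx _)

theorem map_cactusWord {K : Type*} [Group K] (f : G →* K) (p q : ℕ) :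
    f (cactusWord x p q) = cactusWord (f ∘ x) p q := by
  simp only [cactusWord, map_mul, Function.comp_apply]

namespace ClassTwo

theorem commutatorElement_mul_left (hG : ∀ a b : G, ⁅a, b⁆ ∈ center G) (x y z : G) :
    ⁅x * y, z⁆ = ⁅x, z⁆ * ⁅y, z⁆ := by
  rw [commutatorElement_mul_left_eq_conj_mul, mem_center_iff.mp (hG y z) x,
    mul_inv_cancel_right, mem_center_iff.mp (hG y z)]

theorem commutatorElement_mul_right (hG : ∀ a b : G, ⁅a, b⁆ ∈ center G) (x y z : G) :
    ⁅x, y * z⁆ = ⁅x, y⁆ * ⁅x, z⁆ := by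
  rw [commutatorElement_mul_right_eq_mul_conj, mul_assoc _ y, mem_center_iff.mp (hG x z) y,
    ← mul_assoc, mul_inv_cancel_right]

theorem commutatorElement_mul_self_left (hG : ∀ a b : G, ⁅a, b⁆ ∈ center G) {x : G}
    (hx : x * x = 1) (z : G) : ⁅x, z⁆ * ⁅x, z⁆ = 1 := by
  rw [← commutatorElement_mul_left hG, hx, commutatorElement_one_left]

theorem commutatorElement_mul_self_right (hG : ∀ a b : G, ⁅a, b⁆ ∈ center G) {z : G}
    (hz : z * z = 1) (x : G) : ⁅x, z⁆ * ⁅x, z⁆ = 1 := by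
  rw [← commutatorElement_mul_right hG, hz, commutatorElement_one_right]

theorem commutatorElement_comm (hG : ∀ a b : G, ⁅a, b⁆ ∈ center G) {x : G} (hx : x * x = 1)
    (z : G) : ⁅x, z⁆ = ⁅z, x⁆ := by
  rw [← inv_eq_of_mul_eq_one_right (commutatorElement_mul_self_left hG hx z),
    commutatorElement_inv]

theorem conj_eq_mul_commutatorElement (hG : ∀ a b : G, ⁅a, b⁆ ∈ center G) {a : G}
    (ha : a * a = 1) (b : G) : a * b * a = b * ⁅a, b⁆ := by
  rw [mem_center_iff.mp (hG a b) b, commutatorElement_def, inv_eq_of_mul_eq_one_right ha,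
    inv_mul_cancel_right]

theorem commutatorElement_conj_left (hG : ∀ a b : G, ⁅a, b⁆ ∈ center G) {a : G}
    (ha : a * a = 1) (b z : G) : ⁅a * b * a, z⁆ = ⁅b, z⁆ := by
  rw [commutatorElement_mul_left hG, commutatorElement_mul_left hG, mul_assoc,
    ← mem_center_iff.mp (hG a z), mul_assoc, commutatorElement_mul_self_left hG ha, mul_one]

theorem commutatorElement_conj_right (hG : ∀ a b : G, ⁅a, b⁆ ∈ center G) {c : G}
    (hc : c * c = 1) (x d : G) : ⁅x, c * d * c⁆ = ⁅x, d⁆ := by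
  rw [commutatorElement_mul_right hG, commutatorElement_mul_right hG, mul_assoc,
    ← mem_center_iff.mp (hG x c), mul_assoc, commutatorElement_mul_self_right hG hc, mul_one]

theorem commutatorElement_cactusWord (hG : ∀ a b : G, ⁅a, b⁆ ∈ center G)
    (hx : ∀ m, x m * x m = 1) (p q r s : ℕ) :
    ⁅cactusWord x p q, cactusWord x r s⁆ = ⁅x (q - p + 1), x (s - r + 1)⁆ := by
  rw [cactusWord, cactusWord, commutatorElement_conj_left hG (hx q),
    commutatorElement_conj_right hG (hx s)]

theorem cactusWord_mul_cactusWord_eq_iff (hG : ∀ a b : G, ⁅a, b⁆ ∈ center G)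
    (hx : ∀ m, x m * x m = 1) {p q r s : ℕ} (hrs : r ≤ s) (hs : s ≤ p + q) :
    cactusWord x p q * cactusWord x r s = cactusWord x (p + q - s) (p + q - r) * cactusWord x p q ↔
      ⁅x (s - r + 1), x s⁆ * ⁅x (s - r + 1), x (q - p + 1)⁆ = ⁅x (s - r + 1), x (p + q - r)⁆ := by
  have hlen : p + q - r - (p + q - s) + 1 = s - r + 1 := by omega
  rw [← mul_left_inj (cactusWord x p q), mul_assoc (cactusWord x _ _) (cactusWord x p q),
    cactusWord_mul_self hx, mul_one, conj_eq_mul_commutatorElement hG (cactusWord_mul_self hx p q),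
    commutatorElement_cactusWord hG hx]
  unfold cactusWord
  rw [hlen, conj_eq_mul_commutatorElement hG (hx s),
    conj_eq_mul_commutatorElement hG (hx (p + q - r)), mul_assoc, mul_right_inj,
    commutatorElement_comm hG (hx s), commutatorElement_comm hG (hx (q - p + 1)),
    commutatorElement_comm hG (hx (p + q - r))]

end ClassTwo

end

namespace CactusGroup

open Subgroup ClassTwo

variable {n : ℕ}

theorem cactusσ_of (g : CactusGen n) : cactusσ n g.1.1 g.1.2 = PresentedGroup.of g :=
  dif_pos g.2

theorem cactusσ_mul_self (p q : ℕ) : cactusσ n p q * cactusσ n p q = 1 := by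
  unfold cactusσ
  split
  · rw [← pow_two]
    exact (map_pow _ _ _).symm.trans (PresentedGroup.one_of_mem (Or.inl ⟨_, rfl⟩))
  · exact mul_one 1

theorem commute_cactusσ {p q r s : ℕ} (hpq : 1 ≤ p ∧ p < q ∧ q ≤ n) (hrs : 1 ≤ r ∧ r < s ∧ s ≤ n)
    (hd : q < r ∨ s < p) : Commute (cactusσ n p q) (cactusσ n r s) := by
  rw [cactusσ, dif_pos hpq, cactusσ, dif_pos hrs]
  exact PresentedGroup.mk_eq_mk_of_mul_inv_mem
    (Or.inr (Or.inl ⟨⟨(p, q), hpq⟩, ⟨(r, s), hrs⟩, hd, rfl⟩))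

theorem cactusσ_mul_cactusσ_of_nested {p q r s : ℕ} (hpq : 1 ≤ p ∧ p < q ∧ q ≤ n)
    (hrs : 1 ≤ r ∧ r < s ∧ s ≤ n) (hpr : p ≤ r) (hsq : s ≤ q) :
    cactusσ n p q * cactusσ n r s = cactusσ n (p + q - s) (p + q - r) * cactusσ n p q := by
  have hk : 1 ≤ p + q - s ∧ p + q - s < p + q - r ∧ p + q - r ≤ n := by omega
  rw [cactusσ, dif_pos hpq, cactusσ, dif_pos hrs, cactusσ, dif_pos hk]
  exact PresentedGroup.mk_eq_mk_of_mul_inv_mem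
    (Or.inr (Or.inr ⟨⟨(p, q), hpq⟩, ⟨(r, s), hrs⟩, ⟨_, hk⟩, hpr, hsq, rfl, rfl, rfl⟩))

theorem cactusσ_eq_cactusWord {p q : ℕ} (hp : 1 ≤ p) (hpq : p < q) (hq : q ≤ n) :
    cactusσ n p q = cactusWord (cactusσ n 1) p q := by
  have h := cactusσ_mul_cactusσ_of_nested (n := n) (p := 1) (q := q) (r := 1) (s := q - p + 1)
    (by omega) (by omega) le_rfl (by omega)
  rw [show 1 + q - (q - p + 1) = p by omega, show 1 + q - 1 = q by omega] at h
  rw [cactusWord, h, mul_assoc, cactusσ_mul_self, mul_one]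

abbrev ModGamma3 (n : ℕ) := CactusGroup n ⧸ (⊤ : Subgroup (CactusGroup n)).lowerCentralSeries 2

def barσ (n m : ℕ) : ModGamma3 n := QuotientGroup.mk (cactusσ n 1 m)

theorem ModGamma3.commutatorElement_mem_center (a b : ModGamma3 n) : ⁅a, b⁆ ∈ center _ :=
  commutatorElement_mem_center_quotient_lowerCentralSeries_two a b

theorem barσ_mul_self (m : ℕ) : barσ n m * barσ n m = 1 := by
  rw [barσ, ← QuotientGroup.mk_mul, cactusσ_mul_self, QuotientGroup.mk_one]

theorem mk_cactusσ {p q : ℕ} (hp : 1 ≤ p) (hpq : p < q) (hq : q ≤ n) :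
    (QuotientGroup.mk (cactusσ n p q) : ModGamma3 n) = cactusWord (barσ n) p q := by
  rw [cactusσ_eq_cactusWord hp hpq hq]
  exact map_cactusWord (QuotientGroup.mk' _) p q

theorem commutatorElement_barσ_eq_one_of_add_le {i j : ℕ} (hi : 2 ≤ i) (hj : 2 ≤ j)
    (hij : i + j ≤ n) : ⁅barσ n i, barσ n j⁆ = 1 := by
  have h := (commute_cactusσ (n := n) (p := 1) (q := i) (r := i + 1) (s := i + j) (by omega)
    (by omega) (Or.inl (by omega))).map
    (QuotientGroup.mk' ((⊤ : Subgroup (CactusGroup n)).lowerCentralSeries 2))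
  rw [← commutatorElement_eq_one_iff_commute, QuotientGroup.mk'_apply, QuotientGroup.mk'_apply,
    mk_cactusσ (by omega) (by omega) hij, cactusWord, commutatorElement_conj_right
      ModGamma3.commutatorElement_mem_center (barσ_mul_self _),
    show i + j - (i + 1) + 1 = j by omega] at h
  exact h

theorem barσ_star {p q r s : ℕ} (hp : 1 ≤ p) (hpr : p ≤ r) (hrs : r < s) (hsq : s ≤ q)
    (hq : q ≤ n) :
    ⁅barσ n (s - r + 1), barσ n s⁆ * ⁅barσ n (s - r + 1), barσ n (q - p + 1)⁆ =
      ⁅barσ n (s - r + 1), barσ n (p + q - r)⁆ := by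
  have h := congrArg (QuotientGroup.mk' ((⊤ : Subgroup (CactusGroup n)).lowerCentralSeries 2))
    (cactusσ_mul_cactusσ_of_nested (n := n) (p := p) (q := q) (r := r) (s := s) (by omega)
      (by omega) hpr hsq)
  simp only [map_mul, QuotientGroup.mk'_apply] at h
  rw [mk_cactusσ (p := p) (q := q) hp (by omega) hq, mk_cactusσ (p := r) (q := s) (by omega) hrs
    (by omega), mk_cactusσ (p := p + q - s) (q := p + q - r) (by omega) (by omega) (by omega)] at h
  exact (cactusWord_mul_cactusWord_eq_iff ModGamma3.commutatorElement_mem_center barσ_mul_self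
    hrs.le (by omega)).mp h

theorem commutatorElement_barσ_eq_one_of_mod_two_eq {i j : ℕ} (hi : 2 ≤ i) (hj : 2 ≤ j)
    (hin : i ≤ n) (hjn : j ≤ n) (hij : i % 2 = j % 2) : ⁅barσ n i, barσ n j⁆ = 1 := by
  wlog h : i ≤ j generalizing i j
  · rw [commutatorElement_comm ModGamma3.commutatorElement_mem_center (barσ_mul_self i)]
    exact this hj hi hjn hin hij.symm (by omega)
  -- the nesting relation for `σ_{(j-i)/2+1, j}` and `σ_{j-i+1, j}`
  have hstar := barσ_star (n := n) (p := (j - i) / 2 + 1) (q := j) (r := j - i + 1) (s := j)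
    (by omega) (by omega) (by omega) le_rfl hjn
  rw [show j - (j - i + 1) + 1 = i by omega, show j - ((j - i) / 2 + 1) + 1 = (i + j) / 2 by omega,
    show (j - i) / 2 + 1 + j - (j - i + 1) = (i + j) / 2 by omega] at hstar
  exact mul_eq_right.mp hstar

theorem commutatorElement_barσ_eq_of_mod_two_eq {i j k : ℕ} (hi : 2 ≤ i) (hij : i ≤ j)
    (hik : i ≤ k) (hjn : j ≤ n) (hkn : k ≤ n) (hjk : j % 2 = k % 2) :
    ⁅barσ n i, barσ n j⁆ = ⁅barσ n i, barσ n k⁆ := by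
  wlog h : j ≤ k generalizing j k
  · exact (this hik hij hkn hjn hjk.symm (by omega)).symm
  -- the nesting relation for `σ_{j-i+1, k}` and `σ_{j-i+1, j}`
  have hstar := barσ_star (n := n) (p := j - i + 1) (q := k) (r := j - i + 1) (s := j)
    (by omega) le_rfl (by omega) h hkn
  rw [show j - (j - i + 1) + 1 = i by omega, show k - (j - i + 1) + 1 = k - j + i by omega,
    show j - i + 1 + k - (j - i + 1) = k by omega,
    commutatorElement_barσ_eq_one_of_mod_two_eq (j := k - j + i) hi (by omega) (by omega) (by omega)
      (by omega), mul_one] at hstar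
  exact hstar

theorem commutatorElement_barσ_eq_one_of_lt {i j : ℕ} (hi : 2 ≤ i) (hj : 2 ≤ j) (hjn : j ≤ n)
    (hin : i < (n + 1) / 2) : ⁅barσ n i, barσ n j⁆ = 1 := by
  rcases le_or_gt (i + j) n with hij | hij
  · exact commutatorElement_barσ_eq_one_of_add_le hi hj hij
  by_cases hpar : i % 2 = j % 2
  · exact commutatorElement_barσ_eq_one_of_mod_two_eq hi hj (by omega) hjn hpar
  rw [commutatorElement_barσ_eq_of_mod_two_eq (k := i + 1) hi (by omega) (by omega) hjn (by omega)
    (by omega)]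
  exact commutatorElement_barσ_eq_one_of_add_le hi (by omega) (by omega)

abbrev ModGamma3Pres (n : ℕ) := PresentedGroup (cactusModGamma3Rels n)

namespace ModGamma3Pres

def x (n m : ℕ) : ModGamma3Pres n :=
  if h : 2 ≤ m ∧ m ≤ n then PresentedGroup.of ⟨m, h⟩ else 1

theorem x_of (i : {i : ℕ // 2 ≤ i ∧ i ≤ n}) : x n i.1 = PresentedGroup.of i :=
  dif_pos i.2

theorem x_mul_self (m : ℕ) : x n m * x n m = 1 := by
  unfold x
  split
  · rw [← pow_two]
    exact (map_pow _ _ _).symm.trans (PresentedGroup.one_of_mem (Or.inl ⟨_, rfl⟩))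
  · exact mul_one 1

theorem commutatorElement_mem_center (a b : ModGamma3Pres n) : ⁅a, b⁆ ∈ center _ := by
  refine commutatorElement_mem_center_of_closure_eq_top (PresentedGroup.closure_range_of _) ?_ a b
  rintro _ ⟨i, rfl⟩ _ ⟨j, rfl⟩ _ ⟨k, rfl⟩
  exact PresentedGroup.one_of_mem (Or.inr (Or.inr (Or.inl ⟨i, j, k, rfl⟩)))

theorem commutatorElement_x_eq_one {i j : ℕ} (hi : 2 ≤ i) (hin : i ≤ n) (hj : 2 ≤ j) (hjn : j ≤ n)
    (hij : i < (n + 1) / 2 ∨ j % 2 = i % 2) : ⁅x n i, x n j⁆ = 1 := by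
  rw [x_of ⟨i, hi, hin⟩, x_of ⟨j, hj, hjn⟩]
  exact PresentedGroup.one_of_mem (Or.inr (Or.inl ⟨⟨i, hi, hin⟩, ⟨j, hj, hjn⟩, hij, rfl⟩))

theorem commutatorElement_x_eq {i j k : ℕ} (hi : 2 ≤ i) (hij : i ≤ j) (hik : i ≤ k) (hjn : j ≤ n)
    (hkn : k ≤ n) (hjk : k % 2 = j % 2) : ⁅x n i, x n j⁆ = ⁅x n i, x n k⁆ := by
  rw [x_of ⟨i, hi, by omega⟩, x_of ⟨j, by omega, hjn⟩, x_of ⟨k, by omega, hkn⟩]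
  exact PresentedGroup.mk_eq_mk_of_mul_inv_mem (Or.inr (Or.inr (Or.inr
    ⟨⟨i, hi, by omega⟩, ⟨j, by omega, hjn⟩, ⟨k, by omega, hkn⟩, hij, hik, hjk, rfl⟩)))

theorem commutatorElement_x_eq_one_of_add_le {i j : ℕ} (hi : 2 ≤ i) (hj : 2 ≤ j)
    (hij : i + j ≤ n) : ⁅x n i, x n j⁆ = 1 := by
  wlog h : i ≤ j generalizing i j
  · rw [commutatorElement_comm commutatorElement_mem_center (x_mul_self i)]
    exact this hj hi (by omega) (by omega)
  exact commutatorElement_x_eq_one hi (by omega) hj (by omega) (by omega)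

theorem x_star {i j k l : ℕ} (hi : 2 ≤ i) (hij : i ≤ j) (hik : i ≤ k) (hil : i ≤ l) (hjn : j ≤ n)
    (hkn : k ≤ n) (hln : l ≤ n) (hpar : (i + j + k + l) % 2 = 0) :
    ⁅x n i, x n j⁆ * ⁅x n i, x n k⁆ = ⁅x n i, x n l⁆ := by
  have hin : i ≤ n := hij.trans hjn
  by_cases hjk : j % 2 = k % 2
  · rw [commutatorElement_x_eq hi hij hik hjn hkn hjk.symm,
      commutatorElement_mul_self_right commutatorElement_mem_center (x_mul_self k),
      commutatorElement_x_eq_one hi hin (by omega) hln (by omega)]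
  by_cases hij' : i % 2 = j % 2
  · rw [commutatorElement_x_eq_one hi hin (by omega) hjn (by omega), one_mul,
      commutatorElement_x_eq hi hik hil hkn hln (by omega)]
  · rw [commutatorElement_x_eq_one hi hin (by omega) hkn (by omega), mul_one,
      commutatorElement_x_eq hi hij hil hjn hln (by omega)]

end ModGamma3Pres

open ModGamma3Pres

theorem cactusWord_x_satisfies_cactusRels : ∀ r ∈ cactusRels n,
    FreeGroup.lift (fun g : CactusGen n => cactusWord (x n) g.1.1 g.1.2) r = 1 := by
  rintro _ (⟨g, rfl⟩ | ⟨g, h, hgh, rfl⟩ | ⟨g, h, k, hgh₁, hgh₂, hk₁, hk₂, rfl⟩)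
  · rw [map_pow, FreeGroup.lift_apply_of, pow_two]
    exact cactusWord_mul_self x_mul_self _ _
  · have hg := g.2
    have hh := h.2
    simp only [map_mul, map_inv, FreeGroup.lift_apply_of, mul_inv_eq_one]
    rw [← commutatorElement_eq_one_iff_mul_comm,
      commutatorElement_cactusWord ModGamma3Pres.commutatorElement_mem_center x_mul_self]
    exact commutatorElement_x_eq_one_of_add_le (by omega) (by omega) (by omega)
  · have hg := g.2
    have hh := h.2
    simp only [map_mul, map_inv, FreeGroup.lift_apply_of, mul_inv_eq_one]
    rw [hk₁, hk₂, cactusWord_mul_cactusWord_eq_iff ModGamma3Pres.commutatorElement_mem_center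
      x_mul_self (by omega) (by omega)]
    exact x_star (by omega) (by omega) (by omega) (by omega) (by omega) (by omega) (by omega)
      (by omega)

theorem barσ_satisfies_cactusModGamma3Rels :
    ∀ r ∈ cactusModGamma3Rels n, FreeGroup.lift (fun i => barσ n i.1) r = 1 := by
  rintro _ (⟨i, rfl⟩ | ⟨i, j, hij, rfl⟩ | ⟨i, j, k, rfl⟩ | ⟨i, j, k, hij, hik, hjk, rfl⟩)
  · rw [map_pow, FreeGroup.lift_apply_of, pow_two]
    exact barσ_mul_self _
  · rw [map_commutatorElement, FreeGroup.lift_apply_of, FreeGroup.lift_apply_of]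
    rcases hij with hi | hji
    · exact commutatorElement_barσ_eq_one_of_lt i.2.1 j.2.1 j.2.2 hi
    · exact commutatorElement_barσ_eq_one_of_mod_two_eq i.2.1 j.2.1 i.2.2 j.2.2 hji.symm
  · simp only [map_commutatorElement, FreeGroup.lift_apply_of]
    exact commutatorElement_eq_one_iff_mul_comm.mpr
      (mem_center_iff.mp (ModGamma3.commutatorElement_mem_center _ _) _).symm
  · simp only [map_mul, map_inv, map_commutatorElement, FreeGroup.lift_apply_of, mul_inv_eq_one]
    exact commutatorElement_barσ_eq_of_mod_two_eq i.2.1 hij hik j.2.2 k.2.2 hjk.symm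

def ModGamma3.toPres (n : ℕ) : ModGamma3 n →* ModGamma3Pres n :=
  QuotientGroup.lift _ (PresentedGroup.toGroup cactusWord_x_satisfies_cactusRels)
    (lowerCentralSeries_two_le_ker ModGamma3Pres.commutatorElement_mem_center _)

def ModGamma3Pres.toModGamma3 (n : ℕ) : ModGamma3Pres n →* ModGamma3 n :=
  PresentedGroup.toGroup barσ_satisfies_cactusModGamma3Rels

theorem ModGamma3Pres.toModGamma3_x (m : ℕ) : toModGamma3 n (x n m) = barσ n m := by
  unfold x
  split
  · exact PresentedGroup.toGroup.of _
  · rw [map_one, barσ, cactusσ, dif_neg (by omega), QuotientGroup.mk_one]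

theorem ModGamma3.toPres_comp_toModGamma3 :
    (ModGamma3.toPres n).comp (toModGamma3 n) = MonoidHom.id _ := by
  refine PresentedGroup.ext fun i => ?_
  have hi := i.2
  rw [MonoidHom.comp_apply, MonoidHom.id_apply, ← x_of, toModGamma3_x, barσ, cactusσ,
    dif_pos (by omega), ModGamma3.toPres, QuotientGroup.lift_mk, PresentedGroup.toGroup.of]
  change x n i * x n (i - 1 + 1) * x n i = x n i
  rw [Nat.sub_add_cancel (by omega), x_mul_self, one_mul]

theorem ModGamma3Pres.toModGamma3_comp_toPres :
    (toModGamma3 n).comp (ModGamma3.toPres n) = MonoidHom.id _ := by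
  refine QuotientGroup.monoidHom_ext _ (PresentedGroup.ext fun g => ?_)
  have hg := g.2
  change toModGamma3 n (ModGamma3.toPres n (QuotientGroup.mk (PresentedGroup.of g))) =
    QuotientGroup.mk (PresentedGroup.of g)
  rw [ModGamma3.toPres, QuotientGroup.lift_mk,
    PresentedGroup.toGroup.of, map_cactusWord, show ⇑(toModGamma3 n) ∘ x n = barσ n from
      funext toModGamma3_x, ← mk_cactusσ hg.1 hg.2.1 hg.2.2, cactusσ_of]

end CactusGroup

theorem cactus_mod_gamma3_presentation_general (n : ℕ) :
    ∃ e : PresentedGroup (cactusModGamma3Rels n) ≃*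
        (CactusGroup n ⧸ (⊤ : Subgroup (CactusGroup n)).lowerCentralSeries 2),
      ∀ (i : ℕ) (h : 2 ≤ i ∧ i ≤ n),
        e (PresentedGroup.of ⟨i, h⟩) = QuotientGroup.mk (cactusσ n 1 i) :=
  ⟨(CactusGroup.ModGamma3Pres.toModGamma3 n).toMulEquiv (CactusGroup.ModGamma3.toPres n)
      CactusGroup.ModGamma3.toPres_comp_toModGamma3
      CactusGroup.ModGamma3Pres.toModGamma3_comp_toPres,
    fun _ _ => PresentedGroup.toGroup.of CactusGroup.barσ_satisfies_cactusModGamma3Rels⟩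

/-- For every `n ≥ 3`, the quotient `J_n/Γ₃(J_n)` is isomorphic to the group presented by
generators `x_2, …, x_n` and the relators `cactusModGamma3Rels n`, via an isomorphism
sending `x_i` to the class of `σ_{1,i}`. Here `Γ₃(J_n) = lowerCentralSeries (CactusGroup n) 2`. -/
theorem cactus_mod_gamma3_presentation (n : ℕ) (hn : 3 ≤ n) :
    ∃ e : PresentedGroup (cactusModGamma3Rels n) ≃*
        (CactusGroup n ⧸ (⊤ : Subgroup (CactusGroup n)).lowerCentralSeries 2),
      ∀ (i : ℕ) (h : 2 ≤ i ∧ i ≤ n),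
        e (PresentedGroup.of ⟨i, h⟩) = QuotientGroup.mk (cactusσ n 1 i) :=
  cactus_mod_gamma3_presentation_general n
end

section
/- Let G be the group presented by generators a, b, c with relations a² = b² = c² = 1, ab = ba and ac = ca (so G ≅ (ℤ₂ ∗ ℤ₂) × ℤ₂). Then the map sending σ_2 ↦ a, σ_3 ↦ b, σ_4 ↦ c extends to a surjective group homomorphism θ : J_4 → G from the cactus group J_4 onto G, where σ_i := σ_{1,i}. -/
open scoped commutatorElement

/-- The group `G ≅ (ℤ₂ ∗ ℤ₂) × ℤ₂`, presented by generators `a, b, c` with relations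
`a² = b² = c² = 1`, `ab = ba` and `ac = ca`. -/
def infDihedralTimesZ2Rels : Set (FreeGroup (Fin 3)) :=
  {FreeGroup.of (0 : Fin 3) ^ 2, FreeGroup.of (1 : Fin 3) ^ 2, FreeGroup.of (2 : Fin 3) ^ 2,
    ⁅FreeGroup.of (0 : Fin 3), FreeGroup.of (1 : Fin 3)⁆,
    ⁅FreeGroup.of (0 : Fin 3), FreeGroup.of (2 : Fin 3)⁆}

abbrev InfDihedralTimesZ2 := PresentedGroup infDihedralTimesZ2Rels
/-!
In `J_4` the relation `σ_{p,q} σ_{r,s} σ_{p,q} = σ_{p+q-s,p+q-r}` for `[r,s] ⊆ [p,q]` expresses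
`σ_{2,3}`, `σ_{3,4}`, `σ_{2,4}` as the conjugates of `σ_{1,2}`, `σ_{1,2}`, `σ_{1,3}` by `σ_{1,3}`,
`σ_{1,4}`, `σ_{1,4}`. So `θ` must send them to `bab = a`, `cac = a` and `cbc`. With these images
every defining relation of `J_4` becomes a consequence of `a, b, c` being involutions and of `a`
commuting with `b` and `c`, so `θ` exists in any group with such `a, b, c`; it is onto `G`
because `a, b, c` generate `G`.
-/

namespace PresentedGroup

variable {α : Type*} {rels : Set (FreeGroup α)}

theorem of_pow_eq_one_of_mem {x : α} {n : ℕ} (h : FreeGroup.of x ^ n ∈ rels) :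
    (of x : PresentedGroup rels) ^ n = 1 :=
  (map_pow (mk rels) _ n).symm.trans (one_of_mem h)

theorem commute_of_of_commutatorElement_mem {x y : α}
    (h : ⁅FreeGroup.of x, FreeGroup.of y⁆ ∈ rels) : Commute (of x : PresentedGroup rels) (of y) :=
  commutatorElement_eq_one_iff_commute.mp
    ((map_commutatorElement (mk rels) _ _).symm.trans (one_of_mem h))

theorem surjective_of_forall_of_mem_range {K : Type*} [Group K] (θ : K →* PresentedGroup rels)
    (h : ∀ x, of x ∈ θ.range) : Function.Surjective θ :=
  fun y => generated_by rels θ.range h y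

end PresentedGroup

section Involution

variable {H : Type*} [Group H] {c : H}

theorem semiconjBy_conj_of_sq_eq_one (hc : c ^ 2 = 1) (x : H) : SemiconjBy c x (c * x * c) := by
  rw [SemiconjBy, mul_assoc (c * x), ← sq, hc, mul_one]

theorem semiconjBy_conj_symm_of_sq_eq_one (hc : c ^ 2 = 1) (x : H) :
    SemiconjBy c (c * x * c) x := by
  rw [SemiconjBy, ← mul_assoc, ← mul_assoc, ← sq, hc, one_mul]

theorem conj_sq_eq_one {x : H} (hc : c ^ 2 = 1) (hx : x ^ 2 = 1) : (c * x * c) ^ 2 = 1 := by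
  rw [sq, mul_assoc (c * x), (semiconjBy_conj_symm_of_sq_eq_one hc x).eq, mul_assoc,
    ← mul_assoc x, ← sq, hx, one_mul, ← sq, hc]

end Involution

namespace CactusGen

theorem four_cases (g : CactusGen 4) :
    g.1 = (1, 2) ∨ g.1 = (1, 3) ∨ g.1 = (1, 4) ∨ g.1 = (2, 3) ∨ g.1 = (2, 4) ∨ g.1 = (3, 4) := by
  obtain ⟨⟨p, q⟩, hp, hpq, hq⟩ := g
  simp only [Prod.mk.injEq]
  omega

theorem four_eq_of_snd_lt_fst {g h : CactusGen 4} (hgh : g.1.2 < h.1.1) :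
    g.1 = (1, 2) ∧ h.1 = (3, 4) := by
  obtain ⟨⟨p, q⟩, hp, hpq, hq⟩ := g
  obtain ⟨⟨r, s⟩, hr, hrs, hs⟩ := h
  simp only [Prod.mk.injEq] at hgh ⊢
  omega

end CactusGen

namespace Cactus4

variable {H : Type*} [Group H] {a b c : H}

variable (a b c) in
def genImage : ℕ × ℕ → H
  | (1, 3) => b
  | (1, 4) => c
  | (2, 4) => c * b * c
  | _ => a

theorem genImage_sq (ha : a ^ 2 = 1) (hb : b ^ 2 = 1) (hc : c ^ 2 = 1) (g : CactusGen 4) :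
    genImage a b c g.1 ^ 2 = 1 := by
  rcases g.four_cases with h | h | h | h | h | h <;> rw [h]
  exacts [ha, hb, hc, ha, conj_sq_eq_one hc hb, ha]

theorem genImage_commute_of_disjoint {g h : CactusGen 4} (hgh : g.1.2 < h.1.1 ∨ h.1.2 < g.1.1) :
    Commute (genImage a b c g.1) (genImage a b c h.1) := by
  rcases hgh with hgh | hgh
  all_goals
    obtain ⟨hg, hh⟩ := CactusGen.four_eq_of_snd_lt_fst hgh
    rw [hg, hh]
    exact Commute.refl a

theorem genImage_semiconjBy_of_le (hc : c ^ 2 = 1) (hab : Commute a b) (hac : Commute a c)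
    {g h : CactusGen 4} (hpr : g.1.1 ≤ h.1.1) (hsq : h.1.2 ≤ g.1.2) :
    SemiconjBy (genImage a b c g.1) (genImage a b c h.1)
      (genImage a b c (g.1.1 + g.1.2 - h.1.2, g.1.1 + g.1.2 - h.1.1)) := by
  have hacbc : Commute a (c * b * c) := (hac.mul_right hab).mul_right hac
  rcases g.four_cases with hg | hg | hg | hg | hg | hg <;>
  rcases h.four_cases with hh | hh | hh | hh | hh | hh <;>
  rw [hg, hh] at hpr hsq ⊢ <;> dsimp only at hpr hsq <;>
  first
    | omega
    | exact Commute.refl _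
    | exact hab.symm
    | exact hac.symm
    | exact hacbc.symm
    | exact semiconjBy_conj_of_sq_eq_one hc b
    | exact semiconjBy_conj_symm_of_sq_eq_one hc b

theorem lift_genImage_eq_one_of_mem_cactusRels (ha : a ^ 2 = 1) (hb : b ^ 2 = 1)
    (hc : c ^ 2 = 1) (hab : Commute a b) (hac : Commute a c) :
    ∀ r ∈ cactusRels 4, FreeGroup.lift (fun g : CactusGen 4 => genImage a b c g.1) r = 1 := by
  rintro r (⟨g, rfl⟩ | ⟨g, h, hgh, rfl⟩ | ⟨g, h, k, hpr, hsq, hk₁, hk₂, rfl⟩) <;>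
    simp only [map_pow, map_mul, map_inv, FreeGroup.lift_apply_of, mul_inv_eq_one]
  · exact genImage_sq ha hb hc g
  · exact (genImage_commute_of_disjoint hgh).eq
  · rw [show k.1 = (g.1.1 + g.1.2 - h.1.2, g.1.1 + g.1.2 - h.1.1) from Prod.ext hk₁ hk₂]
    exact (genImage_semiconjBy_of_le hc hab hac hpr hsq).eq

def lift (ha : a ^ 2 = 1) (hb : b ^ 2 = 1) (hc : c ^ 2 = 1) (hab : Commute a b)
    (hac : Commute a c) : CactusGroup 4 →* H :=
  PresentedGroup.toGroup (lift_genImage_eq_one_of_mem_cactusRels ha hb hc hab hac)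

theorem lift_cactusσ (ha : a ^ 2 = 1) (hb : b ^ 2 = 1) (hc : c ^ 2 = 1) (hab : Commute a b)
    (hac : Commute a c) {p q : ℕ} (hpq : 1 ≤ p ∧ p < q ∧ q ≤ 4) :
    lift ha hb hc hab hac (cactusσ 4 p q) = genImage a b c (p, q) := by
  rw [cactusσ, dif_pos hpq, lift, PresentedGroup.toGroup.of]

end Cactus4

/-- The map `σ_2 ↦ a`, `σ_3 ↦ b`, `σ_4 ↦ c` extends to a surjective homomorphism
`θ : J_4 → G`, where `G = (ℤ₂ ∗ ℤ₂) × ℤ₂` is presented by `a, b, c` with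
`a² = b² = c² = 1`, `ab = ba`, `ac = ca`, and `σ_i := σ_{1,i}`. -/
theorem cactus4_onto_infDihedral_times_Z2 :
    ∃ θ : CactusGroup 4 →* InfDihedralTimesZ2, Function.Surjective θ ∧
      θ (cactusσ 4 1 2) = PresentedGroup.of (0 : Fin 3) ∧
      θ (cactusσ 4 1 3) = PresentedGroup.of (1 : Fin 3) ∧
      θ (cactusσ 4 1 4) = PresentedGroup.of (2 : Fin 3) := by
  have hsq (i : Fin 3) : (PresentedGroup.of i : InfDihedralTimesZ2) ^ 2 = 1 :=
    PresentedGroup.of_pow_eq_one_of_mem (by fin_cases i <;> simp [infDihedralTimesZ2Rels])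
  set θ := Cactus4.lift (hsq 0) (hsq 1) (hsq 2)
    (PresentedGroup.commute_of_of_commutatorElement_mem (by simp [infDihedralTimesZ2Rels]))
    (PresentedGroup.commute_of_of_commutatorElement_mem (by simp [infDihedralTimesZ2Rels]))
  have hσ₂ : θ (cactusσ 4 1 2) = PresentedGroup.of 0 := Cactus4.lift_cactusσ _ _ _ _ _ (by decide)
  have hσ₃ : θ (cactusσ 4 1 3) = PresentedGroup.of 1 := Cactus4.lift_cactusσ _ _ _ _ _ (by decide)
  have hσ₄ : θ (cactusσ 4 1 4) = PresentedGroup.of 2 := Cactus4.lift_cactusσ _ _ _ _ _ (by decide)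
  refine ⟨θ, PresentedGroup.surjective_of_forall_of_mem_range θ fun i => ?_, hσ₂, hσ₃, hσ₄⟩
  fin_cases i
  exacts [⟨_, hσ₂⟩, ⟨_, hσ₃⟩, ⟨_, hσ₄⟩]
end
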